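/- arXiv:1903.04162 — 7 statements merged into one kernel-verified Lean document; each statement's English description precedes it below -/
import Mathlib

section
/- Let k ≥ 1 and n ≥ 2k + 3 be integers. The 3-graph S₃(n,k) contains no linear path of length 2k + 1, and its minimum degree satisfies δ₁(S₃(n,k)) = kn − k²/2 − 3k/2. -/
/-- The degree of a vertex `v` in a hypergraph with edge set `E`:
the number of edges containing `v`. -/
def hdegree {V : Type*} [DecidableEq V] (E : Finset (Finset V)) (v : V) : ℕ :=
  (E.filter (fun e => v ∈ e)).card

/-- The hypergraph with edge set `E` contains a linear path of length `k`:
a collection of `k` (distinct) edges `e₁, …, e_k` such that `|eᵢ ∩ e_j| = 1`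
if `|i - j| = 1` and `eᵢ ∩ e_j = ∅` otherwise. -/
def HasLinearPath {V : Type*} [DecidableEq V] (E : Finset (Finset V)) (k : ℕ) : Prop :=
  ∃ f : Fin k → Finset V, Function.Injective f ∧ (∀ i, f i ∈ E) ∧
    ∀ i j : Fin k, i ≠ j →
      (((i : ℕ) + 1 = j ∨ (j : ℕ) + 1 = i) → (f i ∩ f j).card = 1) ∧
      (¬((i : ℕ) + 1 = j ∨ (j : ℕ) + 1 = i) → f i ∩ f j = ∅)

/-- The edge set of `S₃(n,k)`: vertices are `Fin n`, with `A` the first `k` vertices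
and `B` the remaining `n - k` vertices; the edges are all 3-element subsets meeting `A`. -/
def S3 (n k : ℕ) : Finset (Finset (Fin n)) :=
  Finset.univ.filter (fun e => e.card = 3 ∧ ∃ v ∈ e, (v : ℕ) < k)

/-!
Every edge of `S₃(n,k)` meets the `k`-set `A`, while in a linear path a vertex lies in at most
two edges (two edges sharing a vertex are consecutive). Hence a linear path has at most `2k`
edges. A vertex of `A` lies in all `C(n-1,2)` triples through it, a vertex of `B` in all of them
except the `C(n-k-1,2)` triples inside `B`; the latter count is the minimum degree
`kn - k²/2 - 3k/2`.
-/

open Finset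

section Hypergraph

variable {V : Type*} [DecidableEq V]

lemma hdegree_sdiff_of_subset {E F : Finset (Finset V)} (h : F ⊆ E) (v : V) :
    hdegree (E \ F) v = hdegree E v - hdegree F v := by
  have hfilter : (E \ F).filter (v ∈ ·) = E.filter (v ∈ ·) \ F.filter (v ∈ ·) := by grind
  rw [hdegree, hdegree, hdegree, hfilter, card_sdiff_of_subset (filter_subset_filter _ h)]

lemma hdegree_powersetCard {s : Finset V} {v : V} (hv : v ∈ s) {r : ℕ} (hr : 1 ≤ r) :
    hdegree (s.powersetCard r) v = (#s - 1).choose (r - 1) := by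
  simpa [hdegree, singleton_subset_iff] using
    card_filter_powersetCard_subset {v} s r (by simpa) (by simpa)

lemma hdegree_powersetCard_of_notMem {s : Finset V} {v : V} (hv : v ∉ s) (r : ℕ) :
    hdegree (s.powersetCard r) v = 0 := by
  rw [hdegree, card_eq_zero, filter_eq_empty_iff]
  exact fun e he hve => hv ((mem_powersetCard.mp he).1 hve)

lemma card_filter_mem_le_two {m : ℕ} {f : Fin m → Finset V}
    (hf : ∀ i j, i ≠ j → (f i ∩ f j).Nonempty → (i : ℕ) + 1 = j ∨ (j : ℕ) + 1 = i) (v : V) :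
    #{i | v ∈ f i} ≤ 2 := by
  by_contra! h
  obtain ⟨a, ha, b, hb, c, hc, hab, hac, hbc⟩ := two_lt_card.mp h
  simp only [mem_filter, mem_univ, true_and] at ha hb hc
  have hab' := hf a b hab ⟨v, mem_inter.mpr ⟨ha, hb⟩⟩
  have hac' := hf a c hac ⟨v, mem_inter.mpr ⟨ha, hc⟩⟩
  have hbc' := hf b c hbc ⟨v, mem_inter.mpr ⟨hb, hc⟩⟩
  have := Fin.val_injective.ne hab
  have := Fin.val_injective.ne hac
  have := Fin.val_injective.ne hbc
  omega

lemma HasLinearPath.le_two_mul_card {E : Finset (Finset V)} {m : ℕ} (h : HasLinearPath E m)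
    {A : Finset V} (hA : ∀ e ∈ E, (e ∩ A).Nonempty) : m ≤ 2 * #A := by
  obtain ⟨f, -, hfE, hpath⟩ := h
  have hconsec : ∀ i j, i ≠ j → (f i ∩ f j).Nonempty → (i : ℕ) + 1 = j ∨ (j : ℕ) + 1 = i :=
    fun i j hij hne => by
      by_contra hc
      exact hne.ne_empty ((hpath i j hij).2 hc)
  choose g hg using fun i => hA _ (hfE i)
  have hfiber : ∀ a ∈ A, #{i | g i = a} ≤ 2 := fun a _ =>
    (card_le_card fun i hi => by
      simp only [mem_filter, mem_univ, true_and] at hi ⊢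
      exact hi ▸ (mem_inter.mp (hg i)).1).trans (card_filter_mem_le_two hconsec a)
  simpa using card_le_mul_card_image_of_maps_to (s := univ)
    (fun i _ => (mem_inter.mp (hg i)).2) 2 hfiber

end Hypergraph

section S3

variable {n k : ℕ}

-- The sets `A` and `B` of the definition of `S₃(n,k)`.
def S3.partA (n k : ℕ) : Finset (Fin n) := {v | (v : ℕ) < k}

def S3.partB (n k : ℕ) : Finset (Fin n) := {v | k ≤ (v : ℕ)}

lemma S3.card_partB : #(S3.partB n k) = n - k := by
  have := card_filter_add_card_filter_not (s := univ) (p := fun v : Fin n => (v : ℕ) < k)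
  simp only [not_lt, Fin.card_filter_val_lt, card_univ, Fintype.card_fin] at this
  rw [S3.partB]
  omega

lemma S3_eq_sdiff (n k : ℕ) : S3 n k = univ.powersetCard 3 \ (S3.partB n k).powersetCard 3 := by
  ext e
  simp only [S3, S3.partB, mem_filter, mem_univ, true_and, mem_sdiff, mem_powersetCard,
    subset_iff]
  grind

lemma inter_partA_nonempty_of_mem_S3 {e : Finset (Fin n)} (he : e ∈ S3 n k) :
    (e ∩ S3.partA n k).Nonempty := by
  obtain ⟨-, v, hv, hvk⟩ := (mem_filter.mp he).2
  exact ⟨v, by simp [S3.partA, hv, hvk]⟩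

lemma not_hasLinearPath_S3 (n k : ℕ) : ¬ HasLinearPath (S3 n k) (2 * k + 1) := fun h => by
  have := h.le_two_mul_card fun _ => inter_partA_nonempty_of_mem_S3
  rw [S3.partA, Fin.card_filter_val_lt] at this
  omega

lemma hdegree_S3 (v : Fin n) :
    hdegree (S3 n k) v = (n - 1).choose 2 - hdegree ((S3.partB n k).powersetCard 3) v := by
  rw [S3_eq_sdiff, hdegree_sdiff_of_subset (powersetCard_mono (subset_univ _)),
    hdegree_powersetCard (mem_univ v) (by norm_num), card_univ, Fintype.card_fin]

lemma hdegree_S3_of_le {v : Fin n} (hv : k ≤ (v : ℕ)) :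
    hdegree (S3 n k) v = (n - 1).choose 2 - (n - k - 1).choose 2 := by
  rw [hdegree_S3, hdegree_powersetCard (by simpa [S3.partB]) (by norm_num), S3.card_partB]

lemma hdegree_S3_ge (v : Fin n) :
    (n - 1).choose 2 - (n - k - 1).choose 2 ≤ hdegree (S3 n k) v := by
  by_cases hv : k ≤ (v : ℕ)
  · exact (hdegree_S3_of_le hv).ge
  · rw [hdegree_S3, hdegree_powersetCard_of_notMem (by simpa [S3.partB] using hv)]
    exact Nat.sub_le _ _

lemma cast_choose_two_sub_choose_two (hkn : k < n) :
    (((n - 1).choose 2 - (n - k - 1).choose 2 : ℕ) : ℚ) = k * n - k ^ 2 / 2 - 3 * k / 2 := by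
  obtain ⟨m, rfl⟩ : ∃ m, n = k + 1 + m := ⟨n - k - 1, by omega⟩
  rw [show k + 1 + m - 1 = k + m by omega, show k + 1 + m - k - 1 = m by omega,
    Nat.cast_sub (Nat.choose_le_choose 2 (by omega)), Nat.cast_choose_two, Nat.cast_choose_two]
  push_cast
  ring

end S3

theorem S3_free_and_min_degree_general
    (k n : ℕ) (hn : 2 * k + 3 ≤ n) :
    ¬ HasLinearPath (S3 n k) (2 * k + 1) ∧
    IsLeast {x : ℚ | ∃ v : Fin n, x = (hdegree (S3 n k) v : ℚ)}
      ((k : ℚ) * n - (k : ℚ) ^ 2 / 2 - 3 * (k : ℚ) / 2) := by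
  have hkn : k < n := by omega
  refine ⟨not_hasLinearPath_S3 n k, ⟨⟨k, hkn⟩, ?_⟩, ?_⟩
  · rw [hdegree_S3_of_le (by simp), cast_choose_two_sub_choose_two hkn]
  · rintro _ ⟨v, rfl⟩
    rw [← cast_choose_two_sub_choose_two hkn]
    exact_mod_cast hdegree_S3_ge v

theorem S3_free_and_min_degree
    (k n : ℕ) (hk : 1 ≤ k) (hn : 2 * k + 3 ≤ n) :
    ¬ HasLinearPath (S3 n k) (2 * k + 1) ∧
    IsLeast {x : ℚ | ∃ v : Fin n, x = (hdegree (S3 n k) v : ℚ)}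
      ((k : ℚ) * n - (k : ℚ) ^ 2 / 2 - 3 * (k : ℚ) / 2) :=
  S3_free_and_min_degree_general k n hn
end

section
/- Let k ≥ 1 and n ≥ 2k + 5 be integers. The 3-graph S₃⁺(n,k) contains no linear path of length 2k + 2, and its minimum degree satisfies δ₁(S₃⁺(n,k)) = kn − k²/2 − 3k/2 + 1. -/
/-- The edge set of `S₃⁺(n,k)`: vertices are `Fin n`, with `A` the first `k` vertices
and `B` the remaining `n - k` vertices.  The edges are all 3-element subsets meeting `A`
(these are the edges of `S₃(n,k)`), together with the edges of a copy of `C₃(n-k, 2)`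
embedded in `B`, namely all 3-element subsets of `B` containing the 2-element set
`S = {k, k+1} ⊆ B`.  (A 3-set containing the vertices `k` and `k+1` either meets `A`,
or is a 3-subset of `B` containing `S`, so the condition below describes exactly
this edge set.) -/
def S3plus (n k : ℕ) : Finset (Finset (Fin n)) :=
  Finset.univ.filter (fun e => e.card = 3 ∧
    ((∃ v ∈ e, (v : ℕ) < k) ∨ ((∃ v ∈ e, (v : ℕ) = k) ∧ ∃ v ∈ e, (v : ℕ) = k + 1)))

open Finset

def IsLinearPath {V : Type*} [DecidableEq V] {m : ℕ} (f : Fin m → Finset V) : Prop :=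
  ∀ i j : Fin m, i ≠ j →
    (((i : ℕ) + 1 = j ∨ (j : ℕ) + 1 = i) → (f i ∩ f j).card = 1) ∧
    (¬((i : ℕ) + 1 = j ∨ (j : ℕ) + 1 = i) → f i ∩ f j = ∅)

namespace IsLinearPath

variable {V : Type*} [DecidableEq V] {m : ℕ} {f : Fin m → Finset V}

theorem card_inter_le_one (hf : IsLinearPath f) {i j : Fin m} (hij : i ≠ j) :
    #(f i ∩ f j) ≤ 1 := by
  by_cases hadj : (i : ℕ) + 1 = j ∨ (j : ℕ) + 1 = i
  · exact ((hf i j hij).1 hadj).le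
  · simp [(hf i j hij).2 hadj]

theorem adjacent_of_mem_of_mem (hf : IsLinearPath f) {i j : Fin m} (hij : i ≠ j) {v : V}
    (hi : v ∈ f i) (hj : v ∈ f j) : (i : ℕ) + 1 = j ∨ (j : ℕ) + 1 = i := by
  by_contra hadj
  simpa [(hf i j hij).2 hadj] using mem_inter.2 ⟨hi, hj⟩

theorem card_filter_mem_le_two (hf : IsLinearPath f) (v : V) : #{i | v ∈ f i} ≤ 2 := by
  by_contra! h
  obtain ⟨i, hi, j, hj, l, hl, hij, hil, hjl⟩ := two_lt_card.1 h
  simp only [mem_filter, mem_univ, true_and] at hi hj hl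
  have := hf.adjacent_of_mem_of_mem hij hi hj
  have := hf.adjacent_of_mem_of_mem hil hi hl
  have := hf.adjacent_of_mem_of_mem hjl hj hl
  omega

theorem card_filter_not_disjoint_le (hf : IsLinearPath f) (A : Finset V) :
    #{i | ¬Disjoint A (f i)} ≤ 2 * #A :=
  calc #{i | ¬Disjoint A (f i)} ≤ #(A.biUnion fun a => {i | a ∈ f i}) :=
        card_le_card fun i hi => by simpa [not_disjoint_iff] using hi
    _ ≤ ∑ a ∈ A, #{i | a ∈ f i} := card_biUnion_le
    _ ≤ ∑ _a ∈ A, 2 := sum_le_sum fun a _ => hf.card_filter_mem_le_two a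
    _ = 2 * #A := by rw [sum_const, smul_eq_mul, mul_comm]

theorem card_filter_superset_le_one (hf : IsLinearPath f) {S : Finset V} (hS : 1 < #S) :
    #{i | S ⊆ f i} ≤ 1 := by
  refine card_le_one.2 fun i hi j hj => by_contra fun hij => ?_
  simp only [mem_filter, mem_univ, true_and] at hi hj
  have := card_le_card (subset_inter hi hj)
  have := hf.card_inter_le_one hij
  omega

theorem length_le (hf : IsLinearPath f) {A S : Finset V} (hS : 1 < #S)
    (hcover : ∀ i, ¬Disjoint A (f i) ∨ S ⊆ f i) : m ≤ 2 * #A + 1 :=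
  calc m = #(univ.filter fun i => ¬Disjoint A (f i) ∨ S ⊆ f i) := by
        simp [filter_true_of_mem fun i _ => hcover i]
    _ ≤ #{i | ¬Disjoint A (f i)} + #{i | S ⊆ f i} := by
        rw [filter_or]; exact card_union_le _ _
    _ ≤ 2 * #A + 1 :=
        add_le_add (hf.card_filter_not_disjoint_le A) (hf.card_filter_superset_le_one hS)

end IsLinearPath

theorem card_filter_mem_powersetCard {α : Type*} [DecidableEq α] {s : Finset α} {v : α}
    (hv : v ∈ s) (r : ℕ) : #{e ∈ s.powersetCard (r + 1) | v ∈ e} = (#s - 1).choose r := by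
  simpa using card_filter_powersetCard_subset {v} s (r + 1) (by simpa) (by simp)

theorem hdegree_add_card_nonEdges {V : Type*} [Fintype V] [DecidableEq V]
    {E : Finset (Finset V)} {r : ℕ} (hE : ∀ e ∈ E, #e = r + 1) (v : V) :
    hdegree E v + #{e ∈ univ.powersetCard (r + 1) | v ∈ e ∧ e ∉ E} =
      (Fintype.card V - 1).choose r := by
  have hdeg : hdegree E v = #{e ∈ univ.powersetCard (r + 1) | v ∈ e ∧ e ∈ E} := by
    unfold hdegree
    congr 1
    ext e
    simp only [mem_filter, mem_powersetCard, subset_univ, true_and]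
    constructor
    · rintro ⟨he, hv⟩; exact ⟨hE e he, hv, he⟩
    · rintro ⟨-, hv, he⟩; exact ⟨he, hv⟩
  rw [hdeg, ← filter_filter, ← filter_filter, card_filter_add_card_filter_not,
    card_filter_mem_powersetCard (mem_univ v), card_univ]

section S3plus

variable {n k : ℕ}

/-- `A` and `S` of the paper; `B` is `(S3plusA n k)ᶜ`. -/
def S3plusA (n k : ℕ) : Finset (Fin n) := {v | (v : ℕ) < k}

def S3plusS (n k : ℕ) : Finset (Fin n) := {v | (v : ℕ) = k ∨ (v : ℕ) = k + 1}

theorem card_S3plusA (h : k ≤ n) : #(S3plusA n k) = k := by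
  simp [S3plusA, Fin.card_filter_val_lt, h]

theorem card_compl_S3plusA (h : k ≤ n) : #(S3plusA n k)ᶜ = n - k := by
  rw [card_compl, Fintype.card_fin, card_S3plusA h]

theorem card_S3plusS (h : k + 1 < n) : #(S3plusS n k) = 2 := by
  have : S3plusS n k = {⟨k, by omega⟩, ⟨k + 1, h⟩} := by
    ext v; simp [S3plusS, Fin.ext_iff]
  rw [this, card_pair (by simp [Fin.ext_iff])]

theorem mem_S3plus (h : k + 1 < n) {e : Finset (Fin n)} :
    e ∈ S3plus n k ↔ #e = 3 ∧ (¬Disjoint (S3plusA n k) e ∨ S3plusS n k ⊆ e) := by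
  have hS : S3plusS n k ⊆ e ↔ (∃ v ∈ e, (v : ℕ) = k) ∧ ∃ v ∈ e, (v : ℕ) = k + 1 := by
    constructor
    · intro hS
      exact ⟨⟨⟨k, by omega⟩, hS (by simp [S3plusS]), rfl⟩,
        ⟨⟨k + 1, h⟩, hS (by simp [S3plusS]), rfl⟩⟩
    · rintro ⟨⟨u, hu, hu'⟩, ⟨w, hw, hw'⟩⟩ v hv
      simp only [S3plusS, mem_filter, mem_univ, true_and] at hv
      rcases hv with hv | hv
      · rwa [Fin.ext (hv.trans hu'.symm)]
      · rwa [Fin.ext (hv.trans hw'.symm)]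
  simp [S3plus, hS, S3plusA, not_disjoint_iff, and_comm]

theorem card_eq_three_of_mem_S3plus {e : Finset (Fin n)} (he : e ∈ S3plus n k) : #e = 3 :=
  (mem_filter.1 he).2.1

theorem not_hasLinearPath_S3plus (h : k + 1 < n) :
    ¬HasLinearPath (S3plus n k) (2 * k + 2) := by
  rintro ⟨f, -, hE, hf⟩
  have hlen := IsLinearPath.length_le hf (by rw [card_S3plusS h]; omega)
    fun i => ((mem_S3plus h).1 (hE i)).2
  rw [card_S3plusA (by omega)] at hlen
  omega

theorem notMem_S3plus_iff (h : k + 1 < n) {e : Finset (Fin n)} (he : #e = 3) :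
    e ∉ S3plus n k ↔ e ⊆ (S3plusA n k)ᶜ ∧ ¬S3plusS n k ⊆ e := by
  rw [mem_S3plus h, subset_compl_iff_disjoint_left]
  tauto

theorem filter_nonEdges_S3plus_subset (h : k + 1 < n) (v : Fin n) :
    {e ∈ (univ : Finset (Fin n)).powersetCard 3 | v ∈ e ∧ e ∉ S3plus n k} ⊆
      {e ∈ (S3plusA n k)ᶜ.powersetCard 3 | v ∈ e} := by
  intro e he
  simp only [mem_filter, mem_powersetCard, subset_univ, true_and] at he ⊢
  exact ⟨⟨((notMem_S3plus_iff h he.1).1 he.2.2).1, he.1⟩, he.2.1⟩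

theorem card_nonEdges_S3plus_lt (h : k + 3 ≤ n) (v : Fin n) :
    #{e ∈ univ.powersetCard 3 | v ∈ e ∧ e ∉ S3plus n k} < (n - k - 1).choose 2 := by
  by_cases hv : v ∈ S3plusA n k
  · rw [filter_eq_empty_iff.2 fun e he ⟨hve, hnot⟩ => hnot <| (mem_S3plus (by omega)).2
      ⟨(mem_powersetCard.1 he).2, Or.inl (not_disjoint_iff.2 ⟨v, hv, hve⟩)⟩, card_empty]
    exact Nat.choose_pos (by omega)
  have hS : S3plusS n k ⊆ (S3plusA n k)ᶜ := fun u hu => by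
    simp only [S3plusS, S3plusA, mem_compl, mem_filter, mem_univ, true_and] at hu ⊢
    omega
  obtain ⟨e₀, hve₀, he₀, he₀card⟩ := exists_subsuperset_card_eq
    (insert_subset (mem_compl.2 hv) hS)
    ((card_insert_le v _).trans (by rw [card_S3plusS (by omega)]))
    (by rw [card_compl_S3plusA (by omega : k ≤ n)]; omega)
  rw [← card_compl_S3plusA (by omega : k ≤ n), ← card_filter_mem_powersetCard (mem_compl.2 hv)]
  refine card_lt_card ((ssubset_iff_of_subset (filter_nonEdges_S3plus_subset (by omega) v)).2
    ⟨e₀, ?_, fun hmem => ?_⟩)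
  · exact mem_filter.2 ⟨mem_powersetCard.2 ⟨he₀, he₀card⟩, hve₀ (mem_insert_self _ _)⟩
  · exact ((notMem_S3plus_iff (by omega) he₀card).1 (mem_filter.1 hmem).2.2).2
      ((subset_insert _ _).trans hve₀)

theorem choose_le_card_nonEdges_S3plus_add_one (h : k + 3 ≤ n) :
    (n - k - 1).choose 2 ≤
      #{e ∈ univ.powersetCard 3 | ⟨k + 2, by omega⟩ ∈ e ∧ e ∉ S3plus n k} + 1 := by
  set w : Fin n := ⟨k + 2, by omega⟩
  have hw : w ∉ S3plusA n k := by simp [w, S3plusA]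
  have he₀card : #(insert w (S3plusS n k)) = 3 := by
    rw [card_insert_of_notMem (by simp [w, S3plusS]), card_S3plusS (by omega)]
  rw [← card_compl_S3plusA (by omega : k ≤ n), ← card_filter_mem_powersetCard (mem_compl.2 hw)]
  refine (card_le_card fun e he => ?_).trans (card_insert_le (insert w (S3plusS n k)) _)
  obtain ⟨⟨heB, hecard⟩, hwe⟩ : (e ⊆ (S3plusA n k)ᶜ ∧ #e = 3) ∧ w ∈ e := by
    simpa only [mem_filter, mem_powersetCard] using he
  by_cases hSe : S3plusS n k ⊆ e
  · exact mem_insert.2 <| Or.inl <|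
      (eq_of_subset_of_card_le (insert_subset hwe hSe) (by rw [hecard, he₀card])).symm
  · exact mem_insert_of_mem <| mem_filter.2
      ⟨mem_powersetCard.2 ⟨subset_univ e, hecard⟩, hwe,
        (notMem_S3plus_iff (by omega) hecard).2 ⟨heB, hSe⟩⟩

theorem choose_add_one_le_hdegree_S3plus (h : k + 3 ≤ n) (v : Fin n) :
    (n - 1).choose 2 + 1 ≤ hdegree (S3plus n k) v + (n - k - 1).choose 2 := by
  have hsum := hdegree_add_card_nonEdges (E := S3plus n k) (fun _ => card_eq_three_of_mem_S3plus) v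
  have hlt := card_nonEdges_S3plus_lt h v
  simp only [Fintype.card_fin, Nat.reduceAdd] at *
  omega

theorem hdegree_S3plus_add_choose (h : k + 3 ≤ n) :
    hdegree (S3plus n k) ⟨k + 2, by omega⟩ + (n - k - 1).choose 2 = (n - 1).choose 2 + 1 := by
  have hsum := hdegree_add_card_nonEdges (E := S3plus n k) (fun _ => card_eq_three_of_mem_S3plus)
    (⟨k + 2, by omega⟩ : Fin n)
  have hle := choose_le_card_nonEdges_S3plus_add_one h
  have hge := choose_add_one_le_hdegree_S3plus h ⟨k + 2, by omega⟩
  simp only [Fintype.card_fin, Nat.reduceAdd] at *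
  omega

end S3plus

theorem cast_choose_two_sub_cast_choose_two {n k : ℕ} (h : k + 1 ≤ n) :
    (((n - 1).choose 2 : ℕ) : ℚ) - ((n - k - 1).choose 2 : ℕ) =
      (k : ℚ) * n - (k : ℚ) ^ 2 / 2 - 3 * (k : ℚ) / 2 := by
  rw [Nat.cast_choose_two, Nat.cast_choose_two, Nat.cast_sub (by omega), Nat.cast_sub (by omega),
    Nat.cast_sub (by omega)]
  push_cast
  ring

theorem S3plus_free_and_min_degree_general
    (k n : ℕ) (hn : 2 * k + 5 ≤ n) :
    ¬ HasLinearPath (S3plus n k) (2 * k + 2) ∧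
    IsLeast {x : ℚ | ∃ v : Fin n, x = (hdegree (S3plus n k) v : ℚ)}
      ((k : ℚ) * n - (k : ℚ) ^ 2 / 2 - 3 * (k : ℚ) / 2 + 1) := by
  rw [← cast_choose_two_sub_cast_choose_two (by omega : k + 1 ≤ n)]
  refine ⟨not_hasLinearPath_S3plus (by omega), ⟨⟨k + 2, by omega⟩, ?_⟩, ?_⟩
  · have hdeg := hdegree_S3plus_add_choose (n := n) (k := k) (by omega)
    qify at hdeg
    linarith
  · rintro _ ⟨v, rfl⟩
    have hdeg := choose_add_one_le_hdegree_S3plus (k := k) (by omega) v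
    qify at hdeg
    linarith

theorem S3plus_free_and_min_degree
    (k n : ℕ) (hk : 1 ≤ k) (hn : 2 * k + 5 ≤ n) :
    ¬ HasLinearPath (S3plus n k) (2 * k + 2) ∧
    IsLeast {x : ℚ | ∃ v : Fin n, x = (hdegree (S3plus n k) v : ℚ)}
      ((k : ℚ) * n - (k : ℚ) ^ 2 / 2 - 3 * (k : ℚ) / 2 + 1) :=
  S3plus_free_and_min_degree_general k n hn
end

section
/- Let t ≥ 3 and n ≥ 2t + 17 be integers, and let H be a 3-uniform hypergraph on n vertices with minimum degree δ₁(H) ≥ g(n,t). If H contains no linear path of length t + 1, then H contains no copy of C⁺_{t+1} (a linear (t+1)-cycle with a parallel edge) as a subgraph. -/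
/-- `x = (x₀, x₁, …, x_{2t})` is a linear path of length `t` in the hypergraph with
edge set `E`: the `2t+1` vertices are distinct and `{x_{2i}, x_{2i+1}, x_{2i+2}} ∈ E`
for each `i ∈ [0, t-1]`. -/
def IsLinearPathSeq {V : Type*} [DecidableEq V] (E : Finset (Finset V)) (t : ℕ)
    (x : Fin (2 * t + 1) → V) : Prop :=
  Function.Injective x ∧
  ∀ i : Fin t,
    ({x ⟨2 * i, by have := i.isLt; omega⟩,
      x ⟨2 * i + 1, by have := i.isLt; omega⟩,
      x ⟨2 * i + 2, by have := i.isLt; omega⟩} : Finset V) ∈ E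

/-- `dP E x a b` is the number of vertices `y` outside the path `x` such that
`{x_a, x_b, y}` is an edge; this is `d_P(a, b)` in the paper. -/
def dP {V : Type*} [Fintype V] [DecidableEq V] (E : Finset (Finset V)) {t : ℕ}
    (x : Fin (2 * t + 1) → V) (a b : Fin (2 * t + 1)) : ℕ :=
  (Finset.univ.filter
    (fun y => (∀ i, y ≠ x i) ∧ ({x a, x b, y} : Finset V) ∈ E)).card

/-- The function `g(n,t)` from the paper:
`g(n,t) = ((t-1)/2)n + (3/2)t² - (9/2)t + 6` for odd `t`, and
`g(n,t) = ((t-2)/2)n + (3/2)t² - (5/2)t + 6` for even `t`. -/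
def gQ (n t : ℕ) : ℚ :=
  if Odd t then ((t : ℚ) - 1) / 2 * n + 3 / 2 * t ^ 2 - 9 / 2 * t + 6
  else ((t : ℚ) - 2) / 2 * n + 3 / 2 * t ^ 2 - 5 / 2 * t + 6


/-- `f = (e₁, …, e_k)` is a linear cycle of length `k`: `|eᵢ ∩ e_j| = 1` if
`|i - j| = 1` or `|i - j| = k - 1`, and `eᵢ ∩ e_j = ∅` otherwise. -/
def IsLinearCycle {V : Type*} [DecidableEq V] (k : ℕ) (f : Fin k → Finset V) : Prop :=
  Function.Injective f ∧
  ∀ i j : Fin k, i ≠ j →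
    (((i : ℕ) + 1 = j ∨ (j : ℕ) + 1 = i ∨
        ((i : ℕ) = 0 ∧ (j : ℕ) = k - 1) ∨ ((j : ℕ) = 0 ∧ (i : ℕ) = k - 1)) →
      (f i ∩ f j).card = 1) ∧
    (¬((i : ℕ) + 1 = j ∨ (j : ℕ) + 1 = i ∨
        ((i : ℕ) = 0 ∧ (j : ℕ) = k - 1) ∨ ((j : ℕ) = 0 ∧ (i : ℕ) = k - 1)) →
      f i ∩ f j = ∅)

/-- The hypergraph with edge set `E` contains a copy of `C⁺_k`, a linear `k`-cycle
with a parallel edge: a linear `k`-cycle `c` with all edges in `E`, together with an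
edge `f ∈ E` containing a new vertex `v` (not on the cycle) such that for some cycle
edge `c j` we have `|f ∩ c j| = 2` and replacing `c j` by `f` again yields a linear
`k`-cycle. -/
def HasCyclePlus {V : Type*} [DecidableEq V] (E : Finset (Finset V)) (k : ℕ) : Prop :=
  ∃ (c : Fin k → Finset V) (f : Finset V) (j : Fin k),
    (∀ i, c i ∈ E) ∧ IsLinearCycle k c ∧ f ∈ E ∧
    (∃ v ∈ f, ∀ i, v ∉ c i) ∧ (f ∩ c j).card = 2 ∧
    IsLinearCycle k (Function.update c j f)

section Helpers
variable {V : Type*} [DecidableEq V]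

lemma fin_val_add_one {t : ℕ} (ht : 3 ≤ t) (a : Fin (t+1)) :
    ((a+1 : Fin (t+1)) : ℕ) = ((a:ℕ) + 1) % (t+1) := by
  rw [Fin.val_add, Fin.val_one', Nat.mod_eq_of_lt (show (1:ℕ) < t+1 by omega)]

lemma fin_one_ne_zero {t : ℕ} (ht : 3 ≤ t) : (1 : Fin (t+1)) ≠ 0 := by
  intro h
  have := congrArg Fin.val h
  rw [Fin.val_one', Fin.val_zero, Nat.mod_eq_of_lt (show (1:ℕ) < t+1 by omega)] at this
  omega

lemma fin_adj_iff {t : ℕ} (ht : 3 ≤ t) (i j : Fin (t+1)) :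
    ((i : ℕ) + 1 = j ∨ (j : ℕ) + 1 = i ∨
        ((i : ℕ) = 0 ∧ (j : ℕ) = (t+1) - 1) ∨ ((j : ℕ) = 0 ∧ (i : ℕ) = (t+1) - 1)) ↔
    (j = i + 1 ∨ i = j + 1) := by
  have hi := i.isLt; have hj := j.isLt
  rw [Fin.ext_iff (b := i + 1), Fin.ext_iff (b := j + 1), fin_val_add_one ht,
    fin_val_add_one ht]
  rcases Nat.lt_or_ge (i:ℕ) t with h | h
  · rw [Nat.mod_eq_of_lt (by omega)]
    rcases Nat.lt_or_ge (j:ℕ) t with h' | h'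
    · rw [Nat.mod_eq_of_lt (by omega)]; omega
    · have : (j:ℕ) = t := by omega
      rw [this, Nat.mod_self]; omega
  · have hit : (i:ℕ) = t := by omega
    rw [hit, Nat.mod_self]
    rcases Nat.lt_or_ge (j:ℕ) t with h' | h'
    · rw [Nat.mod_eq_of_lt (by omega)]; omega
    · have : (j:ℕ) = t := by omega
      rw [this, Nat.mod_self]; omega

lemma fin_succ_of_val {t : ℕ} (ht : 3 ≤ t) {k k' : Fin (t+1)} (h : (k:ℕ) + 1 = (k':ℕ)) :
    k' = k + 1 := by
  have := k'.isLt
  rw [Fin.ext_iff, fin_val_add_one ht, ← h, Nat.mod_eq_of_lt (by omega)]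

lemma fin_val_of_succ {t : ℕ} (ht : 3 ≤ t) {k k' : Fin (t+1)} (hk' : k' ≠ 0)
    (h : k' = k + 1) : (k:ℕ) + 1 = (k':ℕ) := by
  have := congrArg Fin.val h
  rw [fin_val_add_one ht] at this
  have hlt := k.isLt
  rcases Nat.lt_or_ge (k:ℕ) t with hlt' | hge
  · rw [Nat.mod_eq_of_lt (by omega)] at this; omega
  · have hkt : (k:ℕ) = t := by omega
    rw [hkt, Nat.mod_self] at this
    exact absurd (Fin.ext_iff.mpr (by rw [this, Fin.val_zero])) hk'

lemma cyc_adj {t : ℕ} (ht : 3 ≤ t) {c : Fin (t+1) → Finset V}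
    (hc : IsLinearCycle (t+1) c) (A : Fin (t+1)) : (c A ∩ c (A+1)).card = 1 := by
  have hne : A ≠ A + 1 := by
    intro h
    exact fin_one_ne_zero ht (left_eq_add.mp h)
  exact (hc.2 A (A+1) hne).1 ((fin_adj_iff ht A (A+1)).mpr (Or.inl rfl))

lemma cyc_nonadj {t : ℕ} (ht : 3 ≤ t) {c : Fin (t+1) → Finset V}
    (hc : IsLinearCycle (t+1) c) {A B : Fin (t+1)} (h1 : A ≠ B) (h2 : B ≠ A + 1)
    (h3 : A ≠ B + 1) : c A ∩ c B = ∅ :=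
  (hc.2 A B h1).2 (by rw [fin_adj_iff ht]; tauto)

end Helpers

section Master
variable {V : Type*} [DecidableEq V]

lemma fin_val_one' {t : ℕ} (ht : 3 ≤ t) : ((1 : Fin (t+1)) : ℕ) = 1 := by
  rw [Fin.val_one', Nat.mod_eq_of_lt (show (1:ℕ) < t+1 by omega)]

lemma master {t : ℕ} (ht : 3 ≤ t) (E : Finset (Finset V))
    {c : Fin (t+1) → Finset V} (hc : IsLinearCycle (t+1) c) (hcE : ∀ i, c i ∈ E)
    {g : Finset V} (hg : g ∈ E) (hg3 : g.card = 3) (I : Fin (t+1))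
    (hI : (g ∩ c I).card = 1)
    (h0 : ∀ K, K ≠ I → K ≠ I - 1 → g ∩ c K = ∅) : HasLinearPath E (t+1) := by
  classical
  set F : Fin (t+1) → Finset V := fun k => if k = 0 then g else c (I + k - 1) with hF
  have hAI : ∀ k : Fin (t+1), I + k - 1 = I ↔ k = 1 := by
    intro k
    rw [sub_eq_iff_eq_add]
    exact ⟨fun h => add_left_cancel h, fun h => by rw [h]⟩
  have hAI1 : ∀ k : Fin (t+1), I + k - 1 = I - 1 ↔ k = 0 := by
    intro k
    rw [sub_left_inj]
    exact add_eq_left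
  have hAinj : ∀ k k' : Fin (t+1), I + k - 1 = I + k' - 1 ↔ k = k' := by
    intro k k'
    rw [sub_left_inj, add_right_inj]
  have hAsucc : ∀ k k' : Fin (t+1), (I + k - 1) + 1 = I + k' - 1 ↔ k + 1 = k' := by
    intro k k'
    rw [sub_add_cancel, eq_sub_iff_add_eq, add_assoc, add_right_inj]
  have hgne : ∀ A : Fin (t+1), A ≠ I - 1 → g ≠ c A := by
    intro A hA heq
    rcases eq_or_ne A I with rfl | hne
    · rw [← heq, Finset.inter_self, hg3] at hI; omega
    · have h' := h0 A hne hA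
      rw [← heq, Finset.inter_self] at h'
      rw [h'] at hg3
      simp at hg3
  have hF0 : F 0 = g := by simp [hF]
  have hFk : ∀ k : Fin (t+1), k ≠ 0 → F k = c (I + k - 1) := by
    intro k hk; simp [hF, hk]
  refine ⟨F, ?_, ?_, ?_⟩
  · intro k k' h
    by_cases hk : k = 0 <;> by_cases hk' : k' = 0
    · rw [hk, hk']
    · exfalso
      rw [hk, hF0, hFk k' hk'] at h
      exact hgne _ (fun hh => hk' ((hAI1 k').mp hh)) h
    · exfalso
      rw [hk', hF0, hFk k hk] at h
      exact hgne _ (fun hh => hk ((hAI1 k).mp hh)) h.symm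
    · rw [hFk k hk, hFk k' hk'] at h
      exact (hAinj k k').mp (hc.1 h)
  · intro k
    by_cases hk : k = 0
    · rw [hk, hF0]; exact hg
    · rw [hFk k hk]; exact hcE _
  · have hadj : ∀ i j : Fin (t+1), (i:ℕ) + 1 = (j:ℕ) → (F i ∩ F j).card = 1 := by
      intro i j h
      have hj0 : j ≠ 0 := by
        intro h0
        rw [h0, Fin.val_zero] at h
        omega
      have hji : j = i + 1 := fin_succ_of_val ht h
      by_cases hi : i = 0
      · have hj1 : j = 1 := by rw [hji, hi, zero_add]
        rw [hi, hj1, hF0, hFk 1 (fin_one_ne_zero ht), add_sub_cancel_right]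
        exact hI
      · rw [hFk i hi, hFk j hj0]
        have hA : I + j - 1 = (I + i - 1) + 1 := ((hAsucc i j).mpr hji.symm).symm
        rw [hA]
        exact cyc_adj ht hc _
    have hnon : ∀ i j : Fin (t+1), i ≠ j → ¬((i:ℕ) + 1 = (j:ℕ) ∨ (j:ℕ) + 1 = (i:ℕ)) →
        F i ∩ F j = ∅ := by
      intro i j hij hn
      push_neg at hn
      obtain ⟨hn1, hn2⟩ := hn
      by_cases hi : i = 0
      · have hj0 : j ≠ 0 := by rw [hi] at hij; exact fun h => hij h.symm
        rw [hi, hF0, hFk j hj0]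
        refine h0 _ (fun hh => ?_) (fun hh => hj0 ((hAI1 j).mp hh))
        have : j = 1 := (hAI j).mp hh
        rw [hi, Fin.val_zero, this, fin_val_one' ht] at hn1
        omega
      · by_cases hj : j = 0
        · rw [Finset.inter_comm, hj, hF0, hFk i hi]
          refine h0 _ (fun hh => ?_) (fun hh => hi ((hAI1 i).mp hh))
          have : i = 1 := (hAI i).mp hh
          rw [hj, Fin.val_zero, this, fin_val_one' ht] at hn2
          omega
        · rw [hFk i hi, hFk j hj]
          refine cyc_nonadj ht hc (fun hh => hij ((hAinj i j).mp hh)) (fun hh => ?_)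
            (fun hh => ?_)
          · have : i + 1 = j := (hAsucc i j).mp hh.symm
            exact hn1 (fin_val_of_succ ht hj this.symm)
          · have : j + 1 = i := (hAsucc j i).mp hh.symm
            exact hn2 (fin_val_of_succ ht hi this.symm)
    intro i j hij
    refine ⟨fun h => ?_, hnon i j hij⟩
    rcases h with h | h
    · exact hadj i j h
    · rw [Finset.inter_comm]; exact hadj j i h

end Master

section MoreHelpers
variable {V : Type*} [DecidableEq V]

lemma fin_val_two {t : ℕ} (ht : 3 ≤ t) : ((1+1 : Fin (t+1)) : ℕ) = 2 := by
  rw [fin_val_add_one ht, fin_val_one' ht]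
  exact Nat.mod_eq_of_lt (by omega)

lemma fin_two_ne_zero {t : ℕ} (ht : 3 ≤ t) : (1+1 : Fin (t+1)) ≠ 0 := by
  intro h
  have := congrArg Fin.val h
  rw [fin_val_two ht, Fin.val_zero] at this
  omega

lemma fin_val_three {t : ℕ} (ht : 3 ≤ t) : ((1+1+1 : Fin (t+1)) : ℕ) = 3 := by
  rw [fin_val_add_one ht, fin_val_two ht]
  exact Nat.mod_eq_of_lt (by omega)

lemma fin_three_ne_zero {t : ℕ} (ht : 3 ≤ t) : (1+1+1 : Fin (t+1)) ≠ 0 := by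
  intro h
  have := congrArg Fin.val h
  rw [fin_val_three ht, Fin.val_zero] at this
  omega

/-- Find an index `I` with `a ∈ c I` but `a ∉ c (I+1)`. -/
lemma find_index {t : ℕ} (ht : 3 ≤ t) {c : Fin (t+1) → Finset V}
    (hc : IsLinearCycle (t+1) c) {a : V} {K : Fin (t+1)} (ha : a ∈ c K) :
    ∃ I, a ∈ c I ∧ a ∉ c (I+1) := by
  by_cases h : a ∈ c (K+1)
  · refine ⟨K+1, h, fun h2 => ?_⟩
    have hne1 : K ≠ K+1+1 := fun hh =>
      fin_two_ne_zero ht (left_eq_add.mp (by rwa [add_assoc] at hh))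
    have hne2 : K+1+1 ≠ K+1 := fun hh =>
      fin_one_ne_zero ht (add_eq_left.mp (add_right_cancel hh))
    have hne3 : K ≠ K+1+1+1 := by
      intro hh
      have h' : K + 1 + 1 + 1 = K + (1+1+1) := by simp only [add_assoc]
      exact fin_three_ne_zero ht (left_eq_add.mp (hh.trans h'))
    have hempty : c K ∩ c (K+1+1) = ∅ := cyc_nonadj ht hc hne1 hne2 hne3
    have : a ∈ c K ∩ c (K+1+1) := Finset.mem_inter.mpr ⟨ha, h2⟩
    rw [hempty] at this
    exact absurd this (Finset.notMem_empty a)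
  · exact ⟨K, ha, h⟩

/-- The cycle has at most `2t+2` vertices. -/
lemma cycle_card {t : ℕ} (ht : 3 ≤ t) {c : Fin (t+1) → Finset V}
    (hc : IsLinearCycle (t+1) c) (h3 : ∀ i, (c i).card = 3) :
    (Finset.univ.biUnion c).card ≤ 2*t+2 := by
  classical
  have hw : ∀ i : Fin (t+1), ∃ a, c i ∩ c (i+1) = {a} :=
    fun i => Finset.card_eq_one.mp (cyc_adj ht hc i)
  choose w hwspec using hw
  have hwc : ∀ i : Fin (t+1), w i ∈ c i ∧ w i ∈ c (i+1) := by
    intro i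
    have : w i ∈ c i ∩ c (i+1) := by rw [hwspec i]; exact Finset.mem_singleton_self _
    exact Finset.mem_inter.mp this
  have hm : ∀ i : Fin (t+1), ∃ a, c i \ {w (i-1), w i} = {a} := by
    intro i
    apply Finset.card_eq_one.mp
    have h1 : w (i-1) ∈ c i := by
      have := (hwc (i-1)).2
      rwa [sub_add_cancel] at this
    have h2 : w i ∈ c i := (hwc i).1
    have hne : w (i-1) ≠ w i := by
      intro h
      have hx : w i ∈ c (i-1) ∩ c (i+1) :=
        Finset.mem_inter.mpr ⟨h ▸ (hwc (i-1)).1, (hwc i).2⟩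
      have hne1 : i - 1 ≠ i + 1 := fun hh =>
        fin_two_ne_zero ht (left_eq_add.mp
          (by rw [sub_eq_iff_eq_add] at hh; rwa [add_assoc] at hh))
      have hne2 : i + 1 ≠ (i - 1) + 1 := fun hh =>
        (fun hhh => fin_one_ne_zero ht (sub_eq_self.mp hhh.symm)) (add_right_cancel hh)
      have hne3 : i - 1 ≠ (i + 1) + 1 := by
        intro hh
        rw [sub_eq_iff_eq_add] at hh
        have h' : i + 1 + 1 + 1 = i + (1+1+1) := by simp only [add_assoc]
        exact fin_three_ne_zero ht (left_eq_add.mp (hh.trans h'))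
      have hempty : c (i-1) ∩ c (i+1) = ∅ := cyc_nonadj ht hc hne1 hne2 hne3
      rw [hempty] at hx
      exact absurd hx (Finset.notMem_empty _)
    have hsub : {w (i-1), w i} ⊆ c i := by
      intro x hx
      rcases Finset.mem_insert.mp hx with h | h
      · rwa [h]
      · rw [Finset.mem_singleton.mp h]; exact h2
    rw [Finset.card_sdiff_of_subset hsub, h3 i, Finset.card_insert_of_notMem (by simp [hne]),
      Finset.card_singleton]
  choose m hmspec using hm
  have hcov : Finset.univ.biUnion c ⊆ Finset.univ.image w ∪ Finset.univ.image m := by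
    intro x hx
    obtain ⟨i, _, hxi⟩ := Finset.mem_biUnion.mp hx
    by_cases h1 : x = w (i-1)
    · exact Finset.mem_union_left _ (Finset.mem_image.mpr ⟨i-1, Finset.mem_univ _, h1.symm⟩)
    · by_cases h2 : x = w i
      · exact Finset.mem_union_left _ (Finset.mem_image.mpr ⟨i, Finset.mem_univ _, h2.symm⟩)
      · have : x ∈ c i \ {w (i-1), w i} := Finset.mem_sdiff.mpr ⟨hxi, by simp [h1, h2]⟩
        rw [hmspec i] at this
        exact Finset.mem_union_right _
          (Finset.mem_image.mpr ⟨i, Finset.mem_univ _, (Finset.mem_singleton.mp this).symm⟩)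
  calc (Finset.univ.biUnion c).card
      ≤ (Finset.univ.image w ∪ Finset.univ.image m).card := Finset.card_le_card hcov
    _ ≤ (Finset.univ.image w).card + (Finset.univ.image m).card := Finset.card_union_le _ _
    _ ≤ (t+1) + (t+1) := by
        have h1 := Finset.card_image_le (s := (Finset.univ : Finset (Fin (t+1)))) (f := w)
        have h2 := Finset.card_image_le (s := (Finset.univ : Finset (Fin (t+1)))) (f := m)
        simp only [Finset.card_univ, Fintype.card_fin] at h1 h2
        omega
    _ = 2*t+2 := by ring

lemma gQ_gt (t n : ℕ) (ht : 3 ≤ t) (hn : 2*t+17 ≤ n) :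
    ((2*t^2+3*t : ℕ) : ℚ) < gQ n t := by
  have htq : (3:ℚ) ≤ t := by exact_mod_cast ht
  have hnq : 2*(t:ℚ)+17 ≤ n := by exact_mod_cast hn
  push_cast
  unfold gQ
  rcases Nat.even_or_odd t with he | ho
  · rw [if_neg (Nat.not_odd_iff_even.mpr he)]
    have ht4 : 4 ≤ t := by obtain ⟨k, hk⟩ := he; omega
    have ht4q : (4:ℚ) ≤ t := by exact_mod_cast ht4
    nlinarith [mul_nonneg (by linarith : (0:ℚ) ≤ (t:ℚ)-2)
        (by linarith : (0:ℚ) ≤ (n:ℚ)-(2*(t:ℚ)+17)),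
      mul_nonneg (by linarith : (0:ℚ) ≤ (t:ℚ)-4) (by linarith : (0:ℚ) ≤ (t:ℚ)+6)]
  · rw [if_pos ho]
    nlinarith [mul_nonneg (by linarith : (0:ℚ) ≤ (t:ℚ)-1)
        (by linarith : (0:ℚ) ≤ (n:ℚ)-(2*(t:ℚ)+17)),
      mul_nonneg (by linarith : (0:ℚ) ≤ (t:ℚ)-3) (by linarith : (0:ℚ) ≤ (t:ℚ)+3)]

end MoreHelpers
theorem no_cycle_plus_of_path_free
    (t n : ℕ) (ht : t ≥ 3) (hn : n ≥ 2 * t + 17)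
    (V : Type*) [Fintype V] [DecidableEq V] (hV : Fintype.card V = n)
    (E : Finset (Finset V)) (hE : ∀ e ∈ E, e.card = 3)
    (hdeg : ∀ v : V, gQ n t ≤ (hdegree E v : ℚ))
    (hfree : ¬ HasLinearPath E (t + 1)) :
    ¬ HasCyclePlus E (t + 1) := by
  classical
  intro hplus
  obtain ⟨c, f, j, hcE, hc, hfE, ⟨v, hvf, hvc⟩, hfcj, hupd⟩ := hplus
  have ht3 : 3 ≤ t := ht
  set S : Finset V := Finset.univ.biUnion c with hSdef
  have hmemS : ∀ {x : V}, x ∈ S ↔ ∃ i, x ∈ c i := by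
    intro x
    rw [hSdef]
    simp [Finset.mem_biUnion]
  have hc3 : ∀ i, (c i).card = 3 := fun i => hE _ (hcE i)
  have hf3 : f.card = 3 := hE f hfE
  have hc'j : Function.update c j f j = f := Function.update_self j f c
  have hc'ne : ∀ K, K ≠ j → Function.update c j f K = c K :=
    fun K h => Function.update_of_ne h f c
  have hc'E : ∀ i, Function.update c j f i ∈ E := by
    intro i
    by_cases h : i = j
    · rw [h, hc'j]; exact hfE
    · rw [hc'ne i h]; exact hcE i
  have hj1j : j + 1 ≠ j := fun h => fin_one_ne_zero ht3 (add_eq_left.mp h)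
  have hjm1 : j - 1 ≠ j := fun h => fin_one_ne_zero ht3 (sub_eq_self.mp h)
  have hq1 : (f ∩ c (j+1)).card = 1 := by
    have h := cyc_adj ht3 hupd j
    rwa [hc'j, hc'ne _ hj1j] at h
  have hp1 : (c (j-1) ∩ f).card = 1 := by
    have h := cyc_adj ht3 hupd (j-1)
    rwa [sub_add_cancel, hc'j, hc'ne _ hjm1] at h
  obtain ⟨q, hqdef⟩ := Finset.card_eq_one.mp hq1
  obtain ⟨p, hpdef⟩ := Finset.card_eq_one.mp hp1
  have hqmem : q ∈ f ∩ c (j+1) := by rw [hqdef]; exact Finset.mem_singleton_self q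
  have hpmem : p ∈ c (j-1) ∩ f := by rw [hpdef]; exact Finset.mem_singleton_self p
  have hqf : q ∈ f := (Finset.mem_inter.mp hqmem).1
  have hqc1 : q ∈ c (j+1) := (Finset.mem_inter.mp hqmem).2
  have hpf : p ∈ f := (Finset.mem_inter.mp hpmem).2
  have hpc1 : p ∈ c (j-1) := (Finset.mem_inter.mp hpmem).1
  have hfecj : f ∩ c j = f.erase v := by
    apply Finset.eq_of_subset_of_card_le
    · intro x hx
      obtain ⟨hxf, hxc⟩ := Finset.mem_inter.mp hx
      exact Finset.mem_erase.mpr ⟨fun h => (hvc j) (h ▸ hxc), hxf⟩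
    · rw [Finset.card_erase_of_mem hvf, hf3, hfcj]
  have hqcj : q ∈ c j := by
    have h : q ∈ f.erase v := Finset.mem_erase.mpr ⟨fun h => (hvc (j+1)) (h ▸ hqc1), hqf⟩
    rw [← hfecj] at h
    exact (Finset.mem_inter.mp h).2
  have hpcj : p ∈ c j := by
    have h : p ∈ f.erase v := Finset.mem_erase.mpr ⟨fun h => (hvc (j-1)) (h ▸ hpc1), hpf⟩
    rw [← hfecj] at h
    exact (Finset.mem_inter.mp h).2
  have hm1p1 : c (j-1) ∩ c (j+1) = ∅ := by
    have hne1 : j - 1 ≠ j + 1 := fun hh =>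
      fin_two_ne_zero ht3 (left_eq_add.mp
        (by rw [sub_eq_iff_eq_add] at hh; rwa [add_assoc] at hh))
    have hne2 : j + 1 ≠ (j - 1) + 1 := fun hh => hjm1 (add_right_cancel hh).symm
    have hne3 : j - 1 ≠ (j + 1) + 1 := by
      intro hh
      rw [sub_eq_iff_eq_add] at hh
      have h' : j + 1 + 1 + 1 = j + (1+1+1) := by simp only [add_assoc]
      exact fin_three_ne_zero ht3 (left_eq_add.mp (hh.trans h'))
    exact cyc_nonadj ht3 hc hne1 hne2 hne3
  have hpq : p ≠ q := by
    intro h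
    have hmem : p ∈ c (j-1) ∩ c (j+1) := Finset.mem_inter.mpr ⟨hpc1, h ▸ hqc1⟩
    rw [hm1p1] at hmem
    exact absurd hmem (Finset.notMem_empty _)
  have hr1 : (c j \ {p, q}).card = 1 := by
    have hsub : {p, q} ⊆ c j := by
      intro x hx
      rcases Finset.mem_insert.mp hx with h | h
      · rwa [h]
      · rw [Finset.mem_singleton.mp h]; exact hqcj
    rw [Finset.card_sdiff_of_subset hsub, hc3 j, Finset.card_insert_of_notMem (by simp [hpq]),
      Finset.card_singleton]
  obtain ⟨r, hrdef⟩ := Finset.card_eq_one.mp hr1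
  have hrmem : r ∈ c j \ {p, q} := by rw [hrdef]; exact Finset.mem_singleton_self r
  have hrcj : r ∈ c j := (Finset.mem_sdiff.mp hrmem).1
  have hrpq : r ≠ p ∧ r ≠ q := by
    have h := (Finset.mem_sdiff.mp hrmem).2
    simp at h
    exact h
  have hcjq : c j ∩ c (j+1) = {q} := by
    obtain ⟨x, hx⟩ := Finset.card_eq_one.mp (cyc_adj ht3 hc j)
    have hqin : q ∈ c j ∩ c (j+1) := Finset.mem_inter.mpr ⟨hqcj, hqc1⟩
    rw [hx] at hqin
    rw [hx, Finset.mem_singleton.mp hqin]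
  have hcjp : c (j-1) ∩ c j = {p} := by
    obtain ⟨x, hx⟩ := Finset.card_eq_one.mp
      (by have h := cyc_adj ht3 hc (j-1); rwa [sub_add_cancel] at h :
        (c (j-1) ∩ c j).card = 1)
    have hpin : p ∈ c (j-1) ∩ c j := Finset.mem_inter.mpr ⟨hpc1, hpcj⟩
    rw [hx] at hpin
    rw [hx, Finset.mem_singleton.mp hpin]
  have hronly : ∀ K, K ≠ j → r ∉ c K := by
    intro K hK hrK
    by_cases h1 : K = j + 1
    · have hmem : r ∈ c j ∩ c (j+1) := Finset.mem_inter.mpr ⟨hrcj, h1 ▸ hrK⟩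
      rw [hcjq] at hmem
      exact hrpq.2 (Finset.mem_singleton.mp hmem)
    · by_cases h2 : K = j - 1
      · have hmem : r ∈ c (j-1) ∩ c j := Finset.mem_inter.mpr ⟨h2 ▸ hrK, hrcj⟩
        rw [hcjp] at hmem
        exact hrpq.1 (Finset.mem_singleton.mp hmem)
      · have hempty : c j ∩ c K = ∅ := by
          apply cyc_nonadj ht3 hc (Ne.symm hK) h1
          intro hh
          exact h2 (by rw [hh]; exact (add_sub_cancel_right K 1).symm)
        have hmem : r ∈ c j ∩ c K := Finset.mem_inter.mpr ⟨hrcj, hrK⟩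
        rw [hempty] at hmem
        exact absurd hmem (Finset.notMem_empty _)
  have hqonly : ∀ K, K ≠ j → K ≠ j + 1 → q ∉ c K := by
    intro K h1 h2 hqK
    by_cases h3 : K = j - 1
    · have hmem : q ∈ c (j-1) ∩ c (j+1) := Finset.mem_inter.mpr ⟨h3 ▸ hqK, hqc1⟩
      rw [hm1p1] at hmem
      exact absurd hmem (Finset.notMem_empty _)
    · have hempty : c j ∩ c K = ∅ := by
        apply cyc_nonadj ht3 hc (Ne.symm h1) h2
        intro hh
        exact h3 (by rw [hh]; exact (add_sub_cancel_right K 1).symm)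
      have hmem : q ∈ c j ∩ c K := Finset.mem_inter.mpr ⟨hqcj, hqK⟩
      rw [hempty] at hmem
      exact absurd hmem (Finset.notMem_empty _)
  have hvS : v ∉ S := fun h => by
    obtain ⟨i, hi⟩ := hmemS.mp h
    exact hvc i hi
  have hfsub : ∀ x ∈ f, x = v ∨ x ∈ S := by
    intro x hx
    by_cases hxv : x = v
    · exact Or.inl hxv
    · right
      have h : x ∈ f.erase v := Finset.mem_erase.mpr ⟨hxv, hx⟩
      rw [← hfecj] at h
      exact hmemS.mpr ⟨j, (Finset.mem_inter.mp h).2⟩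
  -- Claim B : an edge at v with one vertex on the cycle and one off gives a path
  have claimB : ∀ e ∈ E, v ∈ e → ∀ x y : V, e.erase v = {x, y} → x ∈ S → y ∉ S → False := by
    intro e heE hve x y hxy hxS hyS
    obtain ⟨K, hK⟩ := hmemS.mp hxS
    obtain ⟨I, hI1, hI2⟩ := find_index ht3 hc hK
    have hmeme : ∀ z, z ∈ e ↔ z = v ∨ z = x ∨ z = y := by
      intro z
      rw [← Finset.insert_erase hve, hxy]
      simp
    apply hfree
    apply master ht3 E hc hcE heE (hE e heE) I
    · have h : e ∩ c I = {x} := by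
        apply Finset.Subset.antisymm
        · intro z hz
          obtain ⟨hze, hzc⟩ := Finset.mem_inter.mp hz
          rcases (hmeme z).mp hze with h | h | h
          · exact absurd (h ▸ hzc) (hvc I)
          · rw [h]; exact Finset.mem_singleton_self x
          · exact absurd (hmemS.mpr ⟨I, h ▸ hzc⟩) hyS
        · intro z hz
          rw [Finset.mem_singleton.mp hz]
          exact Finset.mem_inter.mpr ⟨(hmeme x).mpr (Or.inr (Or.inl rfl)), hI1⟩
      rw [h, Finset.card_singleton]
    · intro K' hK1 hK2
      have hxK' : x ∉ c K' := by
        by_cases h1 : K' = I + 1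
        · rw [h1]; exact hI2
        · intro hxK
          have hempty : c I ∩ c K' = ∅ := by
            apply cyc_nonadj ht3 hc (Ne.symm hK1) h1
            intro hh
            exact hK2 (by rw [hh]; exact (add_sub_cancel_right K' 1).symm)
          have hmem : x ∈ c I ∩ c K' := Finset.mem_inter.mpr ⟨hI1, hxK⟩
          rw [hempty] at hmem
          exact absurd hmem (Finset.notMem_empty _)
      apply Finset.eq_empty_of_forall_notMem
      intro z hz
      obtain ⟨hze, hzc⟩ := Finset.mem_inter.mp hz
      rcases (hmeme z).mp hze with h | h | h
      · exact (hvc K') (h ▸ hzc)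
      · exact hxK' (h ▸ hzc)
      · exact hyS (hmemS.mpr ⟨K', h ▸ hzc⟩)
  -- Claim A : an edge at v with both other vertices off the cycle gives a path
  have claimA : ∀ e ∈ E, v ∈ e → ∀ x y : V, e.erase v = {x, y} → x ∉ S → y ∉ S → False := by
    intro e heE hve x y hxy hxS hyS
    have hxv : x ≠ v := by
      have h : x ∈ e.erase v := by rw [hxy]; exact Finset.mem_insert_self x {y}
      exact (Finset.mem_erase.mp h).1
    have hyv : y ≠ v := by
      have h : y ∈ e.erase v := by
        rw [hxy]; exact Finset.mem_insert_of_mem (Finset.mem_singleton_self y)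
      exact (Finset.mem_erase.mp h).1
    have hmeme : ∀ z, z ∈ e ↔ z = v ∨ z = x ∨ z = y := by
      intro z
      rw [← Finset.insert_erase hve, hxy]
      simp
    apply hfree
    apply master ht3 E hupd hc'E heE (hE e heE) j
    · rw [hc'j]
      have h : e ∩ f = {v} := by
        apply Finset.Subset.antisymm
        · intro z hz
          obtain ⟨hze, hzf⟩ := Finset.mem_inter.mp hz
          rcases (hmeme z).mp hze with h | h | h
          · rw [h]; exact Finset.mem_singleton_self v
          · subst h
            rcases hfsub z hzf with h' | h'
            · exact absurd h' hxv
            · exact absurd h' hxS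
          · subst h
            rcases hfsub z hzf with h' | h'
            · exact absurd h' hyv
            · exact absurd h' hyS
        · exact Finset.singleton_subset_iff.mpr (Finset.mem_inter.mpr ⟨hve, hvf⟩)
      rw [h, Finset.card_singleton]
    · intro K hK1 hK2
      rw [hc'ne K hK1]
      apply Finset.eq_empty_of_forall_notMem
      intro z hz
      obtain ⟨hze, hzc⟩ := Finset.mem_inter.mp hz
      rcases (hmeme z).mp hze with h | h | h
      · exact (hvc K) (h ▸ hzc)
      · exact hxS (hmemS.mpr ⟨K, h ▸ hzc⟩)
      · exact hyS (hmemS.mpr ⟨K, h ▸ hzc⟩)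
  -- Claim C : the edge {v, q, r} gives a path
  have claimC : ∀ e ∈ E, v ∈ e → e.erase v = {q, r} → False := by
    intro e heE hve hqr
    have hmeme : ∀ z, z ∈ e ↔ z = v ∨ z = q ∨ z = r := by
      intro z
      rw [← Finset.insert_erase hve, hqr]
      simp
    apply hfree
    apply master ht3 E hc hcE heE (hE e heE) (j+1)
    · have h : e ∩ c (j+1) = {q} := by
        apply Finset.Subset.antisymm
        · intro z hz
          obtain ⟨hze, hzc⟩ := Finset.mem_inter.mp hz
          rcases (hmeme z).mp hze with h | h | h
          · exact absurd (h ▸ hzc) (hvc (j+1))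
          · rw [h]; exact Finset.mem_singleton_self q
          · exact absurd (h ▸ hzc) (hronly (j+1) hj1j)
        · intro z hz
          rw [Finset.mem_singleton.mp hz]
          exact Finset.mem_inter.mpr ⟨(hmeme q).mpr (Or.inr (Or.inl rfl)), hqc1⟩
      rw [h, Finset.card_singleton]
    · intro K hK1 hK2
      have hKj : K ≠ j := by
        intro h
        exact hK2 (by rw [h]; exact (add_sub_cancel_right j 1).symm)
      apply Finset.eq_empty_of_forall_notMem
      intro z hz
      obtain ⟨hze, hzc⟩ := Finset.mem_inter.mp hz
      rcases (hmeme z).mp hze with h | h | h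
      · exact (hvc K) (h ▸ hzc)
      · exact hqonly K hKj hK1 (h ▸ hzc)
      · exact hronly K hKj (h ▸ hzc)
  -- Counting
  have hdegle : (Finset.filter (fun e => v ∈ e) E).card ≤
      ((S.powersetCard 2).erase {q, r}).card := by
    apply Finset.card_le_card_of_injOn (fun e => e.erase v)
    · intro e he
      obtain ⟨heE, hve⟩ := Finset.mem_filter.mp he
      have hee2 : (e.erase v).card = 2 := by rw [Finset.card_erase_of_mem hve, hE e heE]
      obtain ⟨a, b, hab, habdef⟩ := Finset.card_eq_two.mp hee2
      have haS : a ∈ S := by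
        by_contra haS
        by_cases hbS : b ∈ S
        · exact claimB e heE hve b a (by rw [habdef, Finset.pair_comm]) hbS haS
        · exact claimA e heE hve a b habdef haS hbS
      have hbS : b ∈ S := by
        by_contra hbS
        exact claimB e heE hve a b habdef haS hbS
      apply Finset.mem_erase.mpr
      constructor
      · intro h
        exact claimC e heE hve h
      · apply Finset.mem_powersetCard.mpr
        refine ⟨?_, hee2⟩
        show e.erase v ⊆ S
        rw [habdef]
        intro z hz
        rcases Finset.mem_insert.mp hz with h | h
        · rwa [h]
        · rw [Finset.mem_singleton.mp h]; exact hbS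
    · intro e1 h1 e2 h2 hh
      simp only [Finset.coe_filter, Set.mem_setOf_eq] at h1 h2
      rw [← Finset.insert_erase h1.2, ← Finset.insert_erase h2.2]
      simp only at hh
      rw [hh]
  have hqrS : {q, r} ∈ S.powersetCard 2 := by
    apply Finset.mem_powersetCard.mpr
    constructor
    · intro z hz
      rcases Finset.mem_insert.mp hz with h | h
      · rw [h]; exact hmemS.mpr ⟨j, hqcj⟩
      · rw [Finset.mem_singleton.mp h]; exact hmemS.mpr ⟨j, hrcj⟩
    · rw [Finset.card_insert_of_notMem (by simp [Ne.symm hrpq.2]),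
        Finset.card_singleton]
  have hcount : ((S.powersetCard 2).erase {q, r}).card = S.card.choose 2 - 1 := by
    rw [Finset.card_erase_of_mem hqrS, Finset.card_powersetCard]
  have hS2 : S.card ≤ 2*t+2 := by rw [hSdef]; exact cycle_card ht3 hc hc3
  have hchoose : S.card.choose 2 ≤ (2*t+2).choose 2 := Nat.choose_le_choose 2 hS2
  have h22 : (2*t+2).choose 2 = 2*t^2+3*t+1 := by
    rw [Nat.choose_two_right]
    have e1 : 2*t+2-1 = 2*t+1 := by omega
    rw [e1]
    have e2 : (2*t+2)*(2*t+1) = (2*t^2+3*t+1)*2 := by ring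
    omega
  have hfinal : hdegree E v ≤ 2*t^2+3*t := by
    have h : hdegree E v = (Finset.filter (fun e => v ∈ e) E).card := rfl
    omega
  have hgd := hdeg v
  have hgt := gQ_gt t n ht hn
  have hcast : (hdegree E v : ℚ) ≤ ((2*t^2+3*t : ℕ) : ℚ) := Nat.cast_le.mpr hfinal
  linarith
end

section
/- Let t ≥ 3 and n ≥ 2t + 17 be integers, and let H be a 3-uniform hypergraph on n vertices with minimum degree δ₁(H) ≥ g(n,t) that contains no linear path of length t + 1. If P = (x₀, x₁, ..., x_{2t}) is a linear path of length t in H, then d_P(0, 2t) ≤ 1. -/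
/-!
If two outside vertices `y₁ ≠ y₂` both close `P` into a linear cycle `C_i = P + {x₀, x_{2t}, y_i}`
of length `t + 1`, then every vertex `u` of `C_i` starts a linear path of `t` cycle edges in which
`u` lies only on the first edge; hence an edge meeting `C_i` only in `u` would give a linear path
of length `t + 1`. Applied to the edges through `y₁` (via `C₁` when they contain no path vertex,
via `C₂` otherwise), this confines every such edge to `{y₁} ∪ V(P) ∪ {y₂}`, and `{x₁, y₁, y₂}` is
excluded since it extends `P` itself. So `deg(y₁) ≤ C(2t + 2, 2) - 1 < g(n, t)`.
-/

section LinearPaths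

universe u

variable {V : Type u} [DecidableEq V] {E : Finset (Finset V)}

def IsLinearEdgePath (E : Finset (Finset V)) {k : ℕ} (f : Fin k → Finset V) : Prop :=
  Function.Injective f ∧ (∀ i, f i ∈ E) ∧
    ∀ i j : Fin k, i ≠ j →
      (((i : ℕ) + 1 = j ∨ (j : ℕ) + 1 = i) → (f i ∩ f j).card = 1) ∧
      (¬((i : ℕ) + 1 = j ∨ (j : ℕ) + 1 = i) → f i ∩ f j = ∅)

theorem IsLinearEdgePath.cons {k : ℕ} {f : Fin (k + 1) → Finset V}
    (hf : IsLinearEdgePath E f) {u z₁ z₂ : V} (hg : {u, z₁, z₂} ∈ E) (hu₀ : u ∈ f 0)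
    (hu : ∀ j, j ≠ 0 → u ∉ f j) (hz₁ : ∀ j, z₁ ∉ f j) (hz₂ : ∀ j, z₂ ∉ f j) :
    IsLinearEdgePath E (Fin.cons {u, z₁, z₂} f) := by
  have hinter : ∀ j, ({u, z₁, z₂} : Finset V) ∩ f j = if j = 0 then {u} else ∅ := by
    intro j
    split_ifs with hj
    · subst hj
      simp [Finset.insert_inter_of_mem hu₀, Finset.insert_inter_of_notMem (hz₁ 0),
        Finset.singleton_inter_of_notMem (hz₂ 0)]
    · simp [Finset.insert_inter_of_notMem (hu j hj), Finset.insert_inter_of_notMem (hz₁ j),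
        Finset.singleton_inter_of_notMem (hz₂ j)]
  refine ⟨Fin.cons_injective_iff.2 ⟨?_, hf.1⟩, fun i => ?_, fun i j hij => ?_⟩
  · rintro ⟨j, hj⟩
    exact hz₁ j (hj ▸ by simp)
  · cases i using Fin.cases <;> simp [hg, hf.2.1]
  · cases i using Fin.cases <;> cases j using Fin.cases
    · exact absurd rfl hij
    · simp only [Fin.cons_zero, Fin.cons_succ, hinter, Fin.val_zero, Fin.val_succ]
      split_ifs with hj <;> simp [hj]
    · simp only [Fin.cons_zero, Fin.cons_succ, Finset.inter_comm (f _), hinter, Fin.val_zero,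
        Fin.val_succ]
      split_ifs with hj <;> simp [hj]
    · simpa using hf.2.2 _ _ (fun h => hij (congrArg Fin.succ h))

theorem hdegree_le_card_of_erase_mem {v : V} (S : Finset (Finset V))
    (h : ∀ e ∈ E, v ∈ e → e.erase v ∈ S) : hdegree E v ≤ S.card := by
  refine Finset.card_le_card_of_injOn (·.erase v)
    (fun e he => h e (Finset.mem_filter.1 he).1 (Finset.mem_filter.1 he).2) ?_
  intro e₁ he₁ e₂ he₂ heq
  rw [← Finset.insert_erase (Finset.mem_filter.1 he₁).2,
    ← Finset.insert_erase (Finset.mem_filter.1 he₂).2]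
  exact congrArg (insert v) heq

def pathEdge {t : ℕ} (x : Fin (2 * t + 1) → V) (i : Fin t) : Finset V :=
  {x ⟨2 * i, by omega⟩, x ⟨2 * i + 1, by omega⟩, x ⟨2 * i + 2, by omega⟩}

variable {t : ℕ} {x : Fin (2 * t + 1) → V}

theorem mem_pathEdge_iff (hx : Function.Injective x) {i : Fin t} {a : Fin (2 * t + 1)} :
    x a ∈ pathEdge x i ↔ 2 * (i : ℕ) ≤ a ∧ (a : ℕ) ≤ 2 * i + 2 := by
  simp only [pathEdge, Finset.mem_insert, Finset.mem_singleton, hx.eq_iff, Fin.ext_iff]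
  omega

theorem exists_eq_of_mem_pathEdge {i : Fin t} {c : V} (hc : c ∈ pathEdge x i) :
    ∃ a : Fin (2 * t + 1), c = x a ∧ 2 * (i : ℕ) ≤ a ∧ (a : ℕ) ≤ 2 * i + 2 := by
  simp only [pathEdge, Finset.mem_insert, Finset.mem_singleton] at hc
  rcases hc with rfl | rfl | rfl <;> exact ⟨_, rfl, by simp⟩

theorem IsLinearPathSeq.isLinearEdgePath (hx : IsLinearPathSeq E t x) :
    IsLinearEdgePath E (pathEdge x) := by
  have hmem := fun i a => mem_pathEdge_iff hx.1 (i := i) (a := a)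
  refine ⟨fun i j hij => ?_, hx.2, fun i j hij => ⟨fun hadj => ?_, fun hfar => ?_⟩⟩
  · have hi := (hmem j ⟨2 * i, by omega⟩).1 (hij ▸ (hmem i _).2 (by simp))
    have hj := (hmem i ⟨2 * j, by omega⟩).1 (hij ▸ (hmem j _).2 (by simp))
    ext
    simp only at hi hj
    omega
  · refine Finset.card_eq_one.2 ⟨x ⟨2 * max i j, by omega⟩, Finset.ext fun c => ?_⟩
    rw [Finset.mem_inter, Finset.mem_singleton]
    constructor
    · rintro ⟨hci, hcj⟩
      obtain ⟨a, rfl, ha⟩ := exists_eq_of_mem_pathEdge hci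
      rw [hmem] at hcj
      congr 1
      ext
      simp only [Fin.coe_max]
      omega
    · rintro rfl
      simp only [hmem, Fin.coe_max]
      omega
  · refine Finset.eq_empty_of_forall_notMem fun c hc => ?_
    rw [Finset.mem_inter] at hc
    obtain ⟨a, rfl, ha⟩ := exists_eq_of_mem_pathEdge hc.1
    have := (hmem j a).1 hc.2
    have := Fin.val_ne_of_ne hij
    omega

theorem IsLinearPathSeq.hasLinearPath_succ (hx : IsLinearPathSeq E t x) (ht : t ≠ 0)
    {i : Fin (2 * t + 1)} (hi : (i : ℕ) ≤ 1) {z₁ z₂ : V} (hz₁ : z₁ ∉ Set.range x)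
    (hz₂ : z₂ ∉ Set.range x) (hg : {x i, z₁, z₂} ∈ E) : HasLinearPath E (t + 1) := by
  obtain ⟨k, rfl⟩ := Nat.exists_eq_add_one_of_ne_zero ht
  have hoff : ∀ z ∉ Set.range x, ∀ j, z ∉ pathEdge x j := fun z hz j hzj => by
    obtain ⟨a, rfl, -⟩ := exists_eq_of_mem_pathEdge hzj
    exact hz ⟨a, rfl⟩
  refine ⟨_, hx.isLinearEdgePath.cons hg ?_ (fun j hj => ?_) (hoff z₁ hz₁) (hoff z₂ hz₂)⟩
  · rw [mem_pathEdge_iff hx.1]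
    simp only [Fin.val_zero]
    omega
  · rw [mem_pathEdge_iff hx.1]
    have := Fin.pos_iff_ne_zero.2 hj
    omega

end LinearPaths

section ClosedPaths

universe u

variable {V : Type u} {t : ℕ} {x : Fin (2 * t + 1) → V} {y : V}

/-- The vertex sequence of the linear cycle `P + {x_{2t}, y, x₀}`, read periodically; its windows
`2p, …, 2p + 2t` are the linear paths obtained by rotating the cycle. -/
def cycleSeq (x : Fin (2 * t + 1) → V) (y : V) (m : ℕ) : V :=
  if h : m % (2 * t + 2) < 2 * t + 1 then x ⟨m % (2 * t + 2), h⟩ else y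

theorem cycleSeq_periodic : Function.Periodic (cycleSeq x y) (2 * t + 2) := by
  intro m
  simp only [cycleSeq, Nat.add_mod_right]

theorem cycleSeq_of_lt {m : ℕ} (hm : m < 2 * t + 1) : cycleSeq x y m = x ⟨m, hm⟩ := by
  simp only [cycleSeq, Nat.mod_eq_of_lt (Nat.lt_succ_of_lt hm), hm, dif_pos]

theorem cycleSeq_two_mul_add_one : cycleSeq x y (2 * t + 1) = y := by
  simp [cycleSeq]

theorem cycleSeq_mem (m : ℕ) : cycleSeq x y m ∈ insert y (Set.range x) := by
  unfold cycleSeq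
  split_ifs
  · exact Or.inr ⟨_, rfl⟩
  · exact Or.inl rfl

theorem modEq_of_cycleSeq_eq (hx : Function.Injective x) (hy : y ∉ Set.range x) {m m' : ℕ}
    (h : cycleSeq x y m = cycleSeq x y m') : m ≡ m' [MOD 2 * t + 2] := by
  unfold cycleSeq at h
  split_ifs at h with hm hm'
  · exact Fin.mk.inj (hx h)
  · exact (hy ⟨_, h⟩).elim
  · exact (hy ⟨_, h.symm⟩).elim
  · have := Nat.mod_lt m (by omega : 0 < 2 * t + 2)
    have := Nat.mod_lt m' (by omega : 0 < 2 * t + 2)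
    unfold Nat.ModEq
    omega

variable [DecidableEq V] {E : Finset (Finset V)}

theorem cycleSeq_edge_mem (hx : IsLinearPathSeq E t x)
    (hcl : ({x ⟨0, by omega⟩, x ⟨2 * t, by omega⟩, y} : Finset V) ∈ E) (s : ℕ) :
    {cycleSeq x y (2 * s), cycleSeq x y (2 * s + 1), cycleSeq x y (2 * s + 2)} ∈ E := by
  obtain ⟨q, r, hq, rfl⟩ : ∃ q r, q < t + 1 ∧ s = q + r * (t + 1) :=
    ⟨s % (t + 1), s / (t + 1), Nat.mod_lt _ t.succ_pos, (Nat.mod_add_div' s (t + 1)).symm⟩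
  have hred : ∀ j, cycleSeq x y (2 * (q + r * (t + 1)) + j) = cycleSeq x y (2 * q + j) := by
    intro j
    rw [← cycleSeq_periodic.nat_mul r (2 * q + j), Nat.cast_id]
    ring_nf
  have h₀ := hred 0
  simp only [add_zero] at h₀
  rw [h₀, hred 1, hred 2]
  rcases Nat.lt_succ_iff_lt_or_eq.1 hq with hq | rfl
  · rw [cycleSeq_of_lt (by omega), cycleSeq_of_lt (by omega), cycleSeq_of_lt (by omega)]
    exact hx.2 ⟨q, hq⟩
  · rw [cycleSeq_of_lt (by omega), cycleSeq_two_mul_add_one, ← zero_add (2 * q + 2),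
      cycleSeq_periodic, cycleSeq_of_lt (by omega)]
    rwa [Finset.pair_comm, Finset.insert_comm]

theorem IsLinearPathSeq.rotate (hx : IsLinearPathSeq E t x) (hy : y ∉ Set.range x)
    (hcl : ({x ⟨0, by omega⟩, x ⟨2 * t, by omega⟩, y} : Finset V) ∈ E) (p : ℕ) :
    IsLinearPathSeq E t (fun k => cycleSeq x y (2 * p + k)) := by
  refine ⟨fun k k' h => ?_, fun i => ?_⟩
  · have := Nat.ModEq.add_left_cancel' _ (modEq_of_cycleSeq_eq hx.1 hy h)
    ext
    rwa [Nat.ModEq, Nat.mod_eq_of_lt (by omega), Nat.mod_eq_of_lt (by omega)] at this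
  · simpa only [mul_add, add_assoc] using cycleSeq_edge_mem hx hcl (p + i)

theorem IsLinearPathSeq.hasLinearPath_succ_of_closed (hx : IsLinearPathSeq E t x) (ht : t ≠ 0)
    (hy : y ∉ Set.range x)
    (hcl : ({x ⟨0, by omega⟩, x ⟨2 * t, by omega⟩, y} : Finset V) ∈ E) {u z₁ z₂ : V}
    (hu : u ∈ insert y (Set.range x)) (hz₁ : z₁ ∉ insert y (Set.range x))
    (hz₂ : z₂ ∉ insert y (Set.range x)) (hg : {u, z₁, z₂} ∈ E) : HasLinearPath E (t + 1) := by
  obtain ⟨p, r, hr, rfl⟩ : ∃ p r, r ≤ 1 ∧ u = cycleSeq x y (2 * p + r) := by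
    rcases hu with rfl | ⟨j, rfl⟩
    · exact ⟨t, 1, le_rfl, cycleSeq_two_mul_add_one.symm⟩
    · refine ⟨j / 2, j % 2, by omega, ?_⟩
      rw [cycleSeq_of_lt (by omega)]
      congr
      ext
      simp only
      omega
  have hoff : ∀ z ∉ insert y (Set.range x),
      z ∉ Set.range fun k : Fin (2 * t + 1) => cycleSeq x y (2 * p + k) := by
    rintro z hz ⟨k, rfl⟩
    exact hz (cycleSeq_mem _)
  exact (hx.rotate hy hcl p).hasLinearPath_succ ht (i := ⟨r, by omega⟩) hr (hoff z₁ hz₁)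
    (hoff z₂ hz₂) hg

theorem IsLinearPathSeq.mem_of_edge_of_closed (hx : IsLinearPathSeq E t x) (ht : t ≠ 0)
    (hfree : ¬ HasLinearPath E (t + 1)) {y₁ y₂ : V} (hy₁ : y₁ ∉ Set.range x)
    (hy₂ : y₂ ∉ Set.range x) (hne : y₁ ≠ y₂)
    (hcl₁ : ({x ⟨0, by omega⟩, x ⟨2 * t, by omega⟩, y₁} : Finset V) ∈ E)
    (hcl₂ : ({x ⟨0, by omega⟩, x ⟨2 * t, by omega⟩, y₂} : Finset V) ∈ E) {a b : V}
    (he : {y₁, a, b} ∈ E) (ha : a ≠ y₁) (hb : b ≠ y₁) : a ∈ insert y₂ (Set.range x) := by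
  by_contra ha₂
  have hax : a ∉ Set.range x := fun h => ha₂ (Or.inr h)
  by_cases hbx : b ∈ Set.range x
  · refine hfree (hx.hasLinearPath_succ_of_closed ht hy₂ hcl₂ (z₁ := y₁) (Or.inr hbx) ?_ ha₂ ?_)
    · rintro (h | h)
      exacts [hne h, hy₁ h]
    · rwa [Finset.pair_comm, Finset.insert_comm] at he
  · refine hfree (hx.hasLinearPath_succ_of_closed ht hy₁ hcl₁ (Or.inl rfl) ?_ ?_ he)
    · rintro (h | h)
      exacts [ha h, hax h]
    · rintro (h | h)
      exacts [hb h, hbx h]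

theorem IsLinearPathSeq.hdegree_le_of_closed (hx : IsLinearPathSeq E t x) (ht : t ≠ 0)
    (hE : ∀ e ∈ E, e.card = 3) (hfree : ¬ HasLinearPath E (t + 1)) {y₁ y₂ : V}
    (hy₁ : y₁ ∉ Set.range x) (hy₂ : y₂ ∉ Set.range x) (hne : y₁ ≠ y₂)
    (hcl₁ : ({x ⟨0, by omega⟩, x ⟨2 * t, by omega⟩, y₁} : Finset V) ∈ E)
    (hcl₂ : ({x ⟨0, by omega⟩, x ⟨2 * t, by omega⟩, y₂} : Finset V) ∈ E) :
    hdegree E y₁ ≤ (2 * t + 2).choose 2 - 1 := by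
  set Q := insert y₂ (Finset.univ.image x)
  have hQ : ∀ a, a ∈ Q ↔ a ∈ insert y₂ (Set.range x) := by simp [Q]
  have hQcard : Q.card = 2 * t + 2 := by
    rw [Finset.card_insert_of_notMem (by simpa [Q] using hy₂),
      Finset.card_image_of_injective _ hx.1, Finset.card_fin]
  have hx₁ : x ⟨1, by omega⟩ ≠ y₂ := fun h => hy₂ ⟨_, h⟩
  have hpair : {x ⟨1, by omega⟩, y₂} ∈ Q.powersetCard 2 := by
    simp [Q, Finset.mem_powersetCard, Finset.insert_subset_iff, Finset.card_pair hx₁]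
  calc hdegree E y₁ ≤ ((Q.powersetCard 2).erase {x ⟨1, by omega⟩, y₂}).card :=
        hdegree_le_card_of_erase_mem _ fun e he hy₁e => ?_
    _ = (2 * t + 2).choose 2 - 1 := by
        rw [Finset.card_erase_of_mem hpair, Finset.card_powersetCard, hQcard]
  obtain ⟨a, b, hab, heab⟩ := Finset.card_eq_two.1 (by rw [Finset.card_erase_of_mem hy₁e, hE e he])
  have ha : a ≠ y₁ := Finset.ne_of_mem_erase (s := e) (by simp [heab])
  have hb : b ≠ y₁ := Finset.ne_of_mem_erase (s := e) (by simp [heab])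
  have he' : {y₁, a, b} ∈ E := by rwa [← heab, Finset.insert_erase hy₁e]
  rw [heab, Finset.mem_erase, Finset.mem_powersetCard, Finset.insert_subset_iff,
    Finset.singleton_subset_iff, hQ, hQ]
  refine ⟨fun h => ?_, ⟨hx.mem_of_edge_of_closed ht hfree hy₁ hy₂ hne hcl₁ hcl₂ he' ha hb,
    hx.mem_of_edge_of_closed ht hfree hy₁ hy₂ hne hcl₁ hcl₂ ?_ hb ha⟩, Finset.card_pair hab⟩
  · rw [h] at he'
    refine hfree (hx.hasLinearPath_succ ht (i := ⟨1, by omega⟩) le_rfl hy₁ hy₂ ?_)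
    rwa [Finset.insert_comm]
  · rwa [Finset.pair_comm]

theorem choose_two_le_gQ {n t : ℕ} (ht : 3 ≤ t) (hn : 2 * t + 17 ≤ n) :
    ((2 * t + 2).choose 2 : ℚ) ≤ gQ n t := by
  have htq : (3 : ℚ) ≤ t := by exact_mod_cast ht
  have hnq : 2 * (t : ℚ) + 17 ≤ n := by exact_mod_cast hn
  rw [Nat.cast_choose_two, gQ]
  push_cast
  split_ifs with hodd
  · nlinarith
  · have : (4 : ℚ) ≤ t := by
      have : t ≠ 3 := by rintro rfl; exact hodd ⟨1, rfl⟩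
      exact_mod_cast (show 4 ≤ t by omega)
    nlinarith

theorem dP_endpoints_le_one
    (t n : ℕ) (ht : t ≥ 3) (hn : n ≥ 2 * t + 17)
    (V : Type*) [Fintype V] [DecidableEq V]
    (E : Finset (Finset V)) (hE : ∀ e ∈ E, e.card = 3)
    (hdeg : ∀ v : V, gQ n t ≤ (hdegree E v : ℚ))
    (hfree : ¬ HasLinearPath E (t + 1))
    (x : Fin (2 * t + 1) → V) (hx : IsLinearPathSeq E t x) :
    dP E x ⟨0, by omega⟩ ⟨2 * t, by omega⟩ ≤ 1 := by
  by_contra! hlt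
  obtain ⟨y₁, hy₁, y₂, hy₂, hne⟩ := Finset.one_lt_card.1 hlt
  simp only [Finset.mem_filter, Finset.mem_univ, true_and] at hy₁ hy₂
  have hoff : ∀ y, (∀ i, y ≠ x i) → y ∉ Set.range x := fun y hy ⟨i, hi⟩ => hy i hi.symm
  have hupper := hx.hdegree_le_of_closed (by omega) hE hfree (hoff y₁ hy₁.1) (hoff y₂ hy₂.1)
    hne hy₁.2 hy₂.2
  have hlower : (2 * t + 2).choose 2 ≤ hdegree E y₁ := by
    exact_mod_cast (choose_two_le_gQ ht hn).trans (hdeg y₁)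
  have := Nat.choose_pos (show 2 ≤ 2 * t + 2 by omega)
  omega
end ClosedPaths
end

section
/- Let t ≥ 3 and n ≥ 2t + 17 be integers, and let H be a 3-uniform hypergraph on n vertices with minimum degree δ₁(H) ≥ g(n,t) that contains no linear path of length t + 1. Let P = (x₀, x₁, ..., x_{2t}) be a linear path of length t in H. If there is some k ∈ [0, t−1] such that d_P(0, 2k+2) > 0 and d_P(2t, 2k) > 0, then d_P(0, 2k+2) + d_P(2t, 2k) ≤ 4. -/
namespace LPAux


def T3 (a : ℕ) : Finset ℕ := {a, a+1, a+2}

def Jf (t k m : ℕ) : Finset ℕ :=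
  if m < k then T3 (2*m)
  else if m = k then {2*t, 2*k, 2*t+2}
  else if m < t then T3 (2*(t+k-m))
  else {0, 2*k+2, 2*t+1}

lemma mem_Jf {t k : ℕ} (hk : k + 1 ≤ t) {m : ℕ} (hm : m ≤ t) (q : ℕ) :
    q ∈ Jf t k m ↔
      (m < k ∧ (q = 2*m ∨ q = 2*m+1 ∨ q = 2*m+2)) ∨
      (m = k ∧ (q = 2*t ∨ q = 2*k ∨ q = 2*t+2)) ∨
      (k < m ∧ m < t ∧ (q = 2*(t+k-m) ∨ q = 2*(t+k-m)+1 ∨ q = 2*(t+k-m)+2)) ∨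
      (m = t ∧ (q = 0 ∨ q = 2*k+2 ∨ q = 2*t+1)) := by
  unfold Jf T3
  split_ifs with h1 h2 h3 <;>
    simp only [Finset.mem_insert, Finset.mem_singleton] <;> omega

lemma J_range {t k : ℕ} (hk : k + 1 ≤ t) {m : ℕ} (hm : m ≤ t) {q : ℕ}
    (h : q ∈ Jf t k m) : q ≤ 2*t+2 := by
  rw [mem_Jf hk hm] at h; omega

lemma J_not2k1 {t k : ℕ} (hk : k + 1 ≤ t) {m : ℕ} (hm : m ≤ t) :
    2*k+1 ∉ Jf t k m := by
  rw [mem_Jf hk hm]; omega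

lemma J_small {t k : ℕ} (ht : 3 ≤ t) (hk : k + 1 ≤ t) {a b : ℕ} (ha : a ≤ t) (hb : b ≤ t)
    (hab : a ≠ b) : (Jf t k a ∩ Jf t k b).card ≤ 1 := by
  refine Finset.card_le_one.2 ?_
  intro q hq q' hq'
  rw [Finset.mem_inter, mem_Jf hk ha, mem_Jf hk hb] at hq hq'
  obtain ⟨hA, hB⟩ := hq
  obtain ⟨hA', hB'⟩ := hq'
  rcases hA with h|h|h|h <;> rcases hB with g|g|g|g <;>
    rcases hA' with h'|h'|h'|h' <;> rcases hB' with g'|g'|g'|g' <;> omega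

lemma J_succ {t k : ℕ} (ht : 3 ≤ t) (hk : k + 1 ≤ t) {a : ℕ} (ha : a ≤ t) :
    (Jf t k a ∩ Jf t k ((a+1) % (t+1))).card = 1 := by
  have h1 : ∀ b w, b ≤ t → a ≠ b → w ∈ Jf t k a → w ∈ Jf t k b →
      (Jf t k a ∩ Jf t k b).card = 1 := by
    intro b w hb hab hw1 hw2
    refine le_antisymm (J_small ht hk ha hb hab) ?_
    exact Finset.card_pos.2 ⟨w, Finset.mem_inter.2 ⟨hw1, hw2⟩⟩
  rcases Nat.lt_or_ge a t with h | h
  · have hb : (a+1) % (t+1) = a+1 := Nat.mod_eq_of_lt (by omega)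
    rw [hb]
    refine h1 (a+1) (if a < k then 2*a+2 else if a = k then 2*t else 2*(t+k-a))
      (by omega) (by omega) ?_ ?_ <;>
      rw [mem_Jf hk (by omega)] <;> split_ifs <;> omega
  · have hat : a = t := by omega
    have hb : (a+1) % (t+1) = 0 := by rw [hat]; exact Nat.mod_self _
    rw [hb]
    refine h1 0 0 (by omega) (by omega) ?_ ?_ <;>
      rw [mem_Jf hk (by omega)] <;> omega

lemma J_nonadj {t k : ℕ} (ht : 3 ≤ t) (hk : k + 1 ≤ t) {a b : ℕ} (ha : a ≤ t) (hb : b ≤ t)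
    (hab : a ≠ b) (h1 : b ≠ (a+1) % (t+1)) (h2 : a ≠ (b+1) % (t+1)) :
    Jf t k a ∩ Jf t k b = ∅ := by
  have ha1 : (a+1) % (t+1) = if a = t then 0 else a + 1 := by
    split_ifs with h
    · rw [h]; exact Nat.mod_self _
    · exact Nat.mod_eq_of_lt (by omega)
  have hb1 : (b+1) % (t+1) = if b = t then 0 else b + 1 := by
    split_ifs with h
    · rw [h]; exact Nat.mod_self _
    · exact Nat.mod_eq_of_lt (by omega)
  rw [ha1] at h1; rw [hb1] at h2
  refine Finset.eq_empty_iff_forall_notMem.2 ?_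
  intro q hq
  rw [Finset.mem_inter, mem_Jf hk ha, mem_Jf hk hb] at hq
  split_ifs at h1 h2 <;> omega

lemma Jloc {t k : ℕ} (ht : 3 ≤ t) (hk : k + 1 ≤ t) {p : ℕ} (hp : p ≤ 2*t+2)
    (hp2 : p ≠ 2*k+1) :
    ∃ r, r ≤ t ∧ p ∈ Jf t k r ∧ p ∉ Jf t k ((r+1) % (t+1)) := by
  have mod1 : ∀ r, r < t → (r+1) % (t+1) = r+1 := fun r hr => Nat.mod_eq_of_lt (by omega)
  have modt : (t+1) % (t+1) = 0 := Nat.mod_self _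
  by_cases c1 : p ≤ 2*k
  · exact ⟨p/2, by omega, by rw [mem_Jf hk (by omega)]; omega,
      by rw [mod1 _ (by omega), mem_Jf hk (by omega)]; omega⟩
  by_cases c2 : p = 2*k+2
  · exact ⟨t, le_rfl, by rw [mem_Jf hk le_rfl]; omega,
      by rw [modt, mem_Jf hk (by omega)]; omega⟩
  by_cases c3 : p = 2*t+1
  · exact ⟨t, le_rfl, by rw [mem_Jf hk le_rfl]; omega,
      by rw [modt, mem_Jf hk (by omega)]; omega⟩
  by_cases c4 : p = 2*t+2
  · exact ⟨k, by omega, by rw [mem_Jf hk (by omega)]; omega,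
      by rw [mod1 _ (by omega), mem_Jf hk (by omega)]; omega⟩
  by_cases c5 : p = 2*t
  · exact ⟨k+1, by omega, by rw [mem_Jf hk (by omega)]; omega,
      by rw [mod1 _ (by omega), mem_Jf hk (by omega)]; omega⟩
  -- now 2k+3 ≤ p ≤ 2t-1
  by_cases c6 : p % 2 = 0
  · exact ⟨t+k-(p/2)+1, by omega, by rw [mem_Jf hk (by omega)]; omega,
      by rw [mod1 _ (by omega), mem_Jf hk (by omega)]; omega⟩
  · exact ⟨t+k-(p/2), by omega, by rw [mem_Jf hk (by omega)]; omega,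
      by rw [mod1 _ (by omega), mem_Jf hk (by omega)]; omega⟩



def wmap {V : Type*} {t : ℕ} (x : Fin (2*t+1) → V) (y z : V) (j : ℕ) : V :=
  if h : j < 2*t+1 then x ⟨j, h⟩ else if j = 2*t+1 then y else z

lemma wmap_lt {V : Type*} {t : ℕ} (x : Fin (2*t+1) → V) (y z : V) {j : ℕ}
    (h : j < 2*t+1) : wmap x y z j = x ⟨j, h⟩ := by
  unfold wmap; rw [dif_pos h]

lemma wmap_y {V : Type*} {t : ℕ} (x : Fin (2*t+1) → V) (y z : V) :
    wmap x y z (2*t+1) = y := by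
  unfold wmap; rw [dif_neg (by omega), if_pos rfl]

lemma wmap_z {V : Type*} {t : ℕ} (x : Fin (2*t+1) → V) (y z : V) :
    wmap x y z (2*t+2) = z := by
  unfold wmap; rw [dif_neg (by omega), if_neg (by omega)]

lemma wmap_inj {V : Type*} {t : ℕ} {x : Fin (2*t+1) → V} {y z : V}
    (hx : Function.Injective x) (hy : ∀ i, y ≠ x i) (hz : ∀ i, z ≠ x i) (hyz : y ≠ z) :
    ∀ a b, a < 2*t+3 → b < 2*t+3 → wmap x y z a = wmap x y z b → a = b := by
  intro a b ha hb hab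
  by_cases h1 : a < 2*t+1 <;> by_cases h2 : b < 2*t+1
  · rw [wmap_lt x y z h1, wmap_lt x y z h2] at hab
    have := hx hab
    exact Fin.mk.inj_iff.1 this
  · rw [wmap_lt x y z h1] at hab
    have hb' : b = 2*t+1 ∨ b = 2*t+2 := by omega
    rcases hb' with rfl | rfl
    · rw [wmap_y] at hab; exact absurd hab.symm (hy _)
    · rw [wmap_z] at hab; exact absurd hab.symm (hz _)
  · rw [wmap_lt x y z h2] at hab
    have ha' : a = 2*t+1 ∨ a = 2*t+2 := by omega
    rcases ha' with rfl | rfl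
    · rw [wmap_y] at hab; exact absurd hab (hy _)
    · rw [wmap_z] at hab; exact absurd hab (hz _)
  · have ha' : a = 2*t+1 ∨ a = 2*t+2 := by omega
    have hb' : b = 2*t+1 ∨ b = 2*t+2 := by omega
    rcases ha' with rfl | rfl <;> rcases hb' with rfl | rfl
    · rfl
    · rw [wmap_y, wmap_z] at hab; exact absurd hab hyz
    · rw [wmap_y, wmap_z] at hab; exact absurd hab.symm hyz
    · rfl

-- the cycle
def cyc {V : Type*} [DecidableEq V] {t : ℕ} (x : Fin (2*t+1) → V) (y z : V) (k m : ℕ) :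
    Finset V := (Jf t k m).image (wmap x y z)

lemma image_T3 {V : Type*} [DecidableEq V] (f : ℕ → V) (a : ℕ) :
    (T3 a).image f = {f a, f (a+1), f (a+2)} := by
  simp [T3]

lemma cyc_mem_E {V : Type*} [DecidableEq V] {E : Finset (Finset V)} {t k : ℕ}
    (ht : 3 ≤ t) (hk : k + 1 ≤ t)
    {x : Fin (2*t+1) → V} (hx : IsLinearPathSeq E t x) {y z : V}
    (hyE : ({x ⟨0, by omega⟩, x ⟨2*k+2, by omega⟩, y} : Finset V) ∈ E)
    (hzE : ({x ⟨2*t, by omega⟩, x ⟨2*k, by omega⟩, z} : Finset V) ∈ E)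
    {m : ℕ} (hm : m ≤ t) : cyc x y z k m ∈ E := by
  unfold cyc Jf
  split_ifs with h1 h2 h3
  · rw [image_T3, wmap_lt x y z (show 2*m < 2*t+1 by omega),
      wmap_lt x y z (show 2*m+1 < 2*t+1 by omega),
      wmap_lt x y z (show 2*m+2 < 2*t+1 by omega)]
    exact hx.2 ⟨m, by omega⟩
  · have : ({2*t, 2*k, 2*t+2} : Finset ℕ).image (wmap x y z)
        = {wmap x y z (2*t), wmap x y z (2*k), wmap x y z (2*t+2)} := by simp
    rw [this, wmap_lt x y z (show 2*t < 2*t+1 by omega),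
      wmap_lt x y z (show 2*k < 2*t+1 by omega), wmap_z]
    exact hzE
  · rw [image_T3, wmap_lt x y z (show 2*(t+k-m) < 2*t+1 by omega),
      wmap_lt x y z (show 2*(t+k-m)+1 < 2*t+1 by omega),
      wmap_lt x y z (show 2*(t+k-m)+2 < 2*t+1 by omega)]
    exact hx.2 ⟨t+k-m, by omega⟩
  · have : ({0, 2*k+2, 2*t+1} : Finset ℕ).image (wmap x y z)
        = {wmap x y z 0, wmap x y z (2*k+2), wmap x y z (2*t+1)} := by simp
    rw [this, wmap_lt x y z (show 0 < 2*t+1 by omega),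
      wmap_lt x y z (show 2*k+2 < 2*t+1 by omega), wmap_y]
    exact hyE

lemma cyc_inter {V : Type*} [DecidableEq V] {t k : ℕ} (hk : k + 1 ≤ t)
    {x : Fin (2*t+1) → V} {y z : V}
    (hw : ∀ a b, a < 2*t+3 → b < 2*t+3 → wmap x y z a = wmap x y z b → a = b)
    {a b : ℕ} (ha : a ≤ t) (hb : b ≤ t) :
    cyc x y z k a ∩ cyc x y z k b = (Jf t k a ∩ Jf t k b).image (wmap x y z) := by
  refine (Finset.image_inter_of_injOn _ _ ?_).symm
  intro p hp q hq hpq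
  simp only [Finset.coe_union, Set.mem_union, Finset.mem_coe] at hp hq
  have hp' : p ≤ 2*t+2 := by
    rcases hp with h | h
    exacts [J_range hk ha h, J_range hk hb h]
  have hq' : q ≤ 2*t+2 := by
    rcases hq with h | h
    exacts [J_range hk ha h, J_range hk hb h]
  exact hw p q (by omega) (by omega) hpq

lemma mem_cyc_cases {V : Type*} [DecidableEq V] {t k : ℕ} (ht : 3 ≤ t) (hk : k + 1 ≤ t)
    {x : Fin (2*t+1) → V} {y z : V} {v : V} {m : ℕ} (hm : m ≤ t)
    (h : v ∈ cyc x y z k m) :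
    (∃ (j : ℕ) (hj : j < 2*t+1), j ≠ 2*k+1 ∧ j ∈ Jf t k m ∧ v = x ⟨j, hj⟩) ∨
    (2*t+1 ∈ Jf t k m ∧ v = y) ∨ (2*t+2 ∈ Jf t k m ∧ v = z) := by
  obtain ⟨q, hq, hqv⟩ := Finset.mem_image.1 h
  have hq' : q ≤ 2*t+2 := J_range hk hm hq
  by_cases h1 : q < 2*t+1
  · left
    refine ⟨q, h1, ?_, hq, ?_⟩
    · intro hcon; rw [hcon] at hq; exact J_not2k1 hk hm hq
    · rw [← hqv, wmap_lt x y z h1]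
  · rcases (show q = 2*t+1 ∨ q = 2*t+2 by omega) with rfl | rfl
    · right; left; exact ⟨hq, by rw [← hqv, wmap_y]⟩
    · right; right; exact ⟨hq, by rw [← hqv, wmap_z]⟩

lemma shift1 {t r : ℕ} (hr : r ≤ t) : (((r + t) % (t+1)) + 1) % (t+1) = r := by
  rw [Nat.mod_add_mod, show r+t+1 = r + (t+1) by omega, Nat.add_mod_right]
  exact Nat.mod_eq_of_lt (by omega)

lemma shift2 {t r : ℕ} : (((r + t) % (t+1)) + 2) % (t+1) = (r+1) % (t+1) := by
  rw [Nat.mod_add_mod, show r+t+2 = (r+1) + (t+1) by omega, Nat.add_mod_right]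

lemma ext_cycle {V : Type*} [DecidableEq V] {E : Finset (Finset V)} {t : ℕ} (ht : 3 ≤ t)
    (hfree : ¬ HasLinearPath E (t+1)) (c : ℕ → Finset V)
    (hmem : ∀ m, m ≤ t → c m ∈ E) (hcard3 : ∀ m, m ≤ t → (c m).card = 3)
    (hadjS : ∀ a, a ≤ t → (c a ∩ c ((a+1) % (t+1))).card = 1)
    (hadj0 : ∀ a b, a ≤ t → b ≤ t → a ≠ b → b ≠ (a+1) % (t+1) → a ≠ (b+1) % (t+1) →
      c a ∩ c b = ∅)
    (hsmall : ∀ a b, a ≤ t → b ≤ t → a ≠ b → (c a ∩ c b).card ≤ 1)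
    {e : Finset V} (he : e ∈ E) (hecard : e.card = 3) {u : V} (hue : u ∈ e)
    {s : ℕ} (hs : s ≤ t)
    (hu1 : u ∈ c ((s+1) % (t+1))) (hu2 : u ∉ c ((s+2) % (t+1)))
    (hint : ∀ m, m ≤ t → m ≠ s → e ∩ c m ⊆ {u}) : False := by
  apply hfree
  set m : ℕ → ℕ := fun i => (s + i) % (t+1) with hm
  have hmle : ∀ i, m i ≤ t := by
    intro i
    have := Nat.mod_lt (s+i) (y := t+1) (by omega)
    simpa [hm] using by omega
  have hinj : ∀ i j, i ≤ t → j ≤ t → m i = m j → i = j := by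
    intro i j hi hj hij
    have h2 : i % (t+1) = j % (t+1) := Nat.ModEq.add_left_cancel' s hij
    rwa [Nat.mod_eq_of_lt (by omega), Nat.mod_eq_of_lt (by omega)] at h2
  have hm0 : m 0 = s := by
    simp only [hm, Nat.add_zero]
    exact Nat.mod_eq_of_lt (by omega)
  have hms : ∀ i, 1 ≤ i → i ≤ t → m i ≠ s := by
    intro i h1 h2 hcon
    have := hinj i 0 (by omega) (by omega) (by rw [hcon, hm0])
    omega
  have hsucc : ∀ i, m (i+1) = (m i + 1) % (t+1) := by
    intro i
    show (s + (i+1)) % (t+1) = ((s+i) % (t+1) + 1) % (t+1)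
    rw [show s + (i+1) = (s+i) + 1 by omega]
    rw [Nat.add_mod (s+i) 1]
    rw [Nat.mod_eq_of_lt (show (1:ℕ) < t+1 by omega)]
  have hwrap : m (t+1) = s := by
    show (s + (t+1)) % (t+1) = s
    rw [Nat.add_mod_right s (t+1)]
    exact Nat.mod_eq_of_lt (by omega)
  have key1 : e ∩ c (m 1) = {u} := by
    refine Finset.Subset.antisymm (hint _ (hmle 1) (hms 1 le_rfl (by omega))) ?_
    rw [Finset.singleton_subset_iff, Finset.mem_inter]
    exact ⟨hue, hu1⟩
  have key2 : ∀ i, 2 ≤ i → i ≤ t → e ∩ c (m i) = ∅ := by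
    intro i h2 hit
    have hsub := hint (m i) (hmle i) (hms i (by omega) hit)
    rcases Finset.subset_singleton_iff.1 hsub with h | h
    · exact h
    exfalso
    have humi : u ∈ c (m i) := by
      have : u ∈ e ∩ c (m i) := by rw [h]; exact Finset.mem_singleton_self u
      exact (Finset.mem_inter.1 this).2
    rcases Nat.eq_or_lt_of_le h2 with h2' | h2'
    · exact hu2 (by rwa [← h2'] at humi)
    · -- i ≥ 3
      have hne1 : m 1 ≠ m i := fun hc => by have := hinj 1 i (by omega) hit hc; omega
      have hne2 : m i ≠ (m 1 + 1) % (t+1) := by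
        rw [← hsucc 1]
        exact fun hc => by have := hinj i 2 hit (by omega) hc; omega
      have hne3 : m 1 ≠ (m i + 1) % (t+1) := by
        rw [← hsucc i]
        rcases Nat.eq_or_lt_of_le hit with hit' | hit'
        · rw [hit', hwrap]
          exact hms 1 le_rfl (by omega)
        · exact fun hc => by have := hinj 1 (i+1) (by omega) (by omega) hc; omega
      have hemp := hadj0 (m 1) (m i) (hmle 1) (hmle i) hne1 hne2 hne3
      have : u ∈ c (m 1) ∩ c (m i) := Finset.mem_inter.2 ⟨hu1, humi⟩
      rw [hemp] at this
      exact absurd this (Finset.notMem_empty u)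
  have hint' : ∀ a, 1 ≤ a → a ≤ t → e ∩ c (m a) ⊆ {u} :=
    fun a h1 h2 => hint (m a) (hmle a) (hms a h1 h2)
  have hinj2 : ∀ a, 1 ≤ a → a ≤ t → e ≠ c (m a) := by
    intro a h1 h2 hc
    have : e ∩ c (m a) = e := by rw [← hc, Finset.inter_self]
    have hle : e.card ≤ 1 := by
      calc e.card = (e ∩ c (m a)).card := by rw [this]
        _ ≤ ({u} : Finset V).card := Finset.card_le_card (hint' a h1 h2)
        _ = 1 := Finset.card_singleton u
    omega
  have hinj3 : ∀ a b, 1 ≤ a → a ≤ t → 1 ≤ b → b ≤ t → a ≠ b → c (m a) ≠ c (m b) := by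
    intro a b h1 h2 h3 h4 h5 hc
    have hmne : m a ≠ m b := fun hcc => h5 (hinj a b h2 h4 hcc)
    have := hsmall (m a) (m b) (hmle a) (hmle b) hmne
    rw [← hc, Finset.inter_self, hcard3 (m a) (hmle a)] at this
    omega
  refine ⟨fun i => if i.val = 0 then e else c (m i.val), ?_, ?_, ?_⟩
  · -- injective
    intro i j hij
    by_contra hne
    have hvne : i.val ≠ j.val := fun h => hne (Fin.ext h)
    have hi := i.isLt
    have hj := j.isLt
    dsimp only at hij
    by_cases hi0 : i.val = 0 <;> by_cases hj0 : j.val = 0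
    · exact hvne (by omega)
    · rw [if_pos hi0, if_neg hj0] at hij
      exact hinj2 j.val (by omega) (by omega) hij
    · rw [if_neg hi0, if_pos hj0] at hij
      exact hinj2 i.val (by omega) (by omega) hij.symm
    · rw [if_neg hi0, if_neg hj0] at hij
      exact hinj3 i.val j.val (by omega) (by omega) (by omega) (by omega) hvne hij
  · intro i
    dsimp only
    by_cases hi0 : i.val = 0
    · rw [if_pos hi0]; exact he
    · rw [if_neg hi0]; exact hmem (m i.val) (hmle i.val)
  · -- pairwise conditions
    have hP : ∀ i j : Fin (t+1), i.val < j.val →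
        ((i.val + 1 = j.val → ((if i.val = 0 then e else c (m i.val)) ∩
            (if j.val = 0 then e else c (m j.val))).card = 1) ∧
         (i.val + 1 < j.val → (if i.val = 0 then e else c (m i.val)) ∩
            (if j.val = 0 then e else c (m j.val)) = ∅)) := by
      intro i j hlt
      have hj0 : j.val ≠ 0 := by omega
      have hjt : j.val ≤ t := by have := j.isLt; omega
      rw [if_neg hj0]
      by_cases hi0 : i.val = 0
      · rw [if_pos hi0]
        constructor
        · intro hadj
          have : j.val = 1 := by omega
          rw [this, key1]
          exact Finset.card_singleton u
        · intro hnadj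
          exact key2 j.val (by omega) hjt
      · rw [if_neg hi0]
        have hit : i.val ≤ t := by omega
        constructor
        · intro hadj
          have : m j.val = (m i.val + 1) % (t+1) := by rw [← hsucc, hadj]
          rw [this]
          exact hadjS (m i.val) (hmle i.val)
        · intro hnadj
          refine hadj0 (m i.val) (m j.val) (hmle _) (hmle _) ?_ ?_ ?_
          · exact fun hc => by have := hinj i.val j.val hit hjt hc; omega
          · rw [← hsucc]
            exact fun hc => by have := hinj j.val (i.val+1) hjt (by omega) hc; omega
          · rw [← hsucc]
            rcases Nat.eq_or_lt_of_le hjt with hjt' | hjt'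
            · rw [hjt', hwrap]
              exact hms i.val (by omega) hit
            · exact fun hc => by have := hinj i.val (j.val+1) hit (by omega) hc; omega
    intro i j hne
    rcases lt_trichotomy i.val j.val with hlt | heq | hgt
    · constructor
      · intro hadj
        rcases hadj with h | h
        · exact (hP i j hlt).1 h
        · omega
      · intro hnadj
        exact (hP i j hlt).2 (by omega)
    · exact absurd (Fin.ext heq) hne
    · constructor
      · intro hadj
        rw [Finset.inter_comm]
        rcases hadj with h | h
        · omega
        · exact (hP j i hgt).1 h
      · intro hnadj
        rw [Finset.inter_comm]
        exact (hP j i hgt).2 (by omega)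


lemma cyc_inter_card {V : Type*} [DecidableEq V] {t k : ℕ} (hk : k + 1 ≤ t)
    {x : Fin (2*t+1) → V} {y z : V}
    (hw : ∀ a b, a < 2*t+3 → b < 2*t+3 → wmap x y z a = wmap x y z b → a = b)
    {a b : ℕ} (ha : a ≤ t) (hb : b ≤ t) :
    (cyc x y z k a ∩ cyc x y z k b).card = (Jf t k a ∩ Jf t k b).card := by
  rw [cyc_inter hk hw ha hb]
  apply Finset.card_image_of_injOn
  intro p hp q hq hpq
  rw [Finset.mem_coe, Finset.mem_inter] at hp hq
  have hp' : p ≤ 2*t+2 := J_range hk ha hp.1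
  have hq' : q ≤ 2*t+2 := J_range hk ha hq.1
  exact hw p q (by omega) (by omega) hpq

lemma pick3 {α : Type*} [DecidableEq α] {s u : Finset α} (hs : 3 ≤ s.card)
    (hu : 1 ≤ u.card) :
    ∃ z ∈ u, ∃ y1 ∈ s, ∃ y2 ∈ s, y1 ≠ y2 ∧ y1 ≠ z ∧ y2 ≠ z := by
  obtain ⟨z, hz⟩ := Finset.card_pos.1 (show 0 < u.card by omega)
  have h2 : 1 < (s.erase z).card := by
    have := Finset.pred_card_le_card_erase (a := z) (s := s)
    omega
  obtain ⟨y1, h1, y2, h2', h12⟩ := Finset.one_lt_card.1 h2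
  exact ⟨z, hz, y1, (Finset.mem_erase.1 h1).2, y2, (Finset.mem_erase.1 h2').2, h12,
    (Finset.mem_erase.1 h1).1, (Finset.mem_erase.1 h2').1⟩

lemma gQ_big {t n : ℕ} (ht : 3 ≤ t) (hn : 2*t+17 ≤ n) :
    (((t+1)*(2*t+1) - 1 : ℕ) : ℚ) < gQ n t := by
  have h1 : (t+1)*(2*t+1) - 1 = 2*t*t + 3*t := by
    have : (t+1)*(2*t+1) = 2*t*t+3*t+1 := by ring
    omega
  rw [h1]
  have hnQ : (2*(t:ℚ)+17) ≤ (n:ℚ) := by exact_mod_cast hn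
  have htQ : (3:ℚ) ≤ (t:ℚ) := by exact_mod_cast ht
  unfold gQ
  rcases Nat.even_or_odd t with he | ho
  · rw [if_neg (Nat.not_odd_iff_even.mpr he)]
    have ht4 : 4 ≤ t := by
      rw [Nat.even_iff] at he
      omega
    have ht4Q : (4:ℚ) ≤ (t:ℚ) := by exact_mod_cast ht4
    have key : (0:ℚ) ≤ ((t:ℚ)-2) * ((n:ℚ) - (2*t+17)) :=
      mul_nonneg (by linarith) (by linarith)
    push_cast
    nlinarith [key, mul_nonneg (show (0:ℚ) ≤ (t:ℚ)-4 by linarith) (show (0:ℚ) ≤ (t:ℚ)+6 by linarith)]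
  · rw [if_pos ho]
    have key : (0:ℚ) ≤ ((t:ℚ)-1) * ((n:ℚ) - (2*t+17)) :=
      mul_nonneg (by linarith) (by linarith)
    push_cast
    nlinarith [key, mul_nonneg (show (0:ℚ) ≤ (t:ℚ)-3 by linarith) (show (0:ℚ) ≤ (t:ℚ)+3 by linarith)]

set_option maxHeartbeats 2000000 in
lemma core {t n : ℕ} (ht : 3 ≤ t) (hn : 2*t+17 ≤ n)
    {V : Type*} [Fintype V] [DecidableEq V]
    {E : Finset (Finset V)} (hE : ∀ e ∈ E, e.card = 3)
    (hdeg : ∀ v : V, gQ n t ≤ (hdegree E v : ℚ))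
    (hfree : ¬ HasLinearPath E (t + 1))
    {x : Fin (2 * t + 1) → V} (hx : IsLinearPathSeq E t x)
    {k : ℕ} (hk : k ≤ t - 1)
    (hY : 3 ≤ dP E x ⟨0, by omega⟩ ⟨2*k+2, by omega⟩)
    (hZ : 1 ≤ dP E x ⟨2*t, by omega⟩ ⟨2*k, by omega⟩) : False := by
  have hk' : k + 1 ≤ t := by omega
  unfold dP at hY hZ
  obtain ⟨z, hzmem, y1, hy1mem, y2, hy2mem, h12, h1z, h2z⟩ := pick3 hY hZ
  rw [Finset.mem_filter] at hzmem hy1mem hy2mem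
  obtain ⟨-, hzP, hzE⟩ := hzmem
  obtain ⟨-, hy1P, hy1E⟩ := hy1mem
  obtain ⟨-, hy2P, hy2E⟩ := hy2mem
  have hxinj := hx.1
  have hx0 : (0:ℕ) < 2*t+1 := by omega
  obtain ⟨x0, hx0def⟩ : ∃ x0 : V, x0 = x ⟨0, hx0⟩ := ⟨_, rfl⟩
  obtain ⟨X', hX'⟩ : ∃ X' : Finset V,
      X' = (Finset.univ.image x).erase (x ⟨2*k+1, by omega⟩) := ⟨_, rfl⟩
  obtain ⟨S, hSdef⟩ : ∃ S : Finset V, S = insert z (insert y2 X') := ⟨_, rfl⟩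
  have hnotX : ∀ v : V, (∀ i, v ≠ x i) → v ∉ X' := by
    intro v hv h
    rw [hX'] at h
    obtain ⟨i, -, hi⟩ := Finset.mem_image.1 (Finset.mem_of_mem_erase h)
    exact hv i hi.symm
  have hy2X : y2 ∉ X' := hnotX y2 hy2P
  have hzX : z ∉ X' := hnotX z hzP
  have hy1X : y1 ∉ X' := hnotX y1 hy1P
  have hy1S : y1 ∉ S := by
    rw [hSdef]
    simp only [Finset.mem_insert]
    push_neg
    exact ⟨h1z, h12, hy1X⟩
  have hXmem : ∀ (j : ℕ) (hj : j < 2*t+1), j ≠ 2*k+1 → x ⟨j, hj⟩ ∈ X' := by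
    intro j hj hne
    rw [hX']
    refine Finset.mem_erase.2 ⟨?_, Finset.mem_image_of_mem x (Finset.mem_univ _)⟩
    intro hcon
    exact hne (Fin.mk.inj_iff.1 (hxinj hcon))
  have hXS : X' ⊆ S := by
    intro a ha
    rw [hSdef]
    simp only [Finset.mem_insert]
    tauto
  have hy2S : y2 ∈ S := by rw [hSdef]; simp
  have hzS : z ∈ S := by rw [hSdef]; simp
  have hw1 := wmap_inj hxinj hy1P hzP h1z
  have hw2 := wmap_inj hxinj hy2P hzP h2z
  have hmodle : ∀ a : ℕ, (a+1) % (t+1) ≤ t := by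
    intro a
    have := Nat.mod_lt (a+1) (y := t+1) (by omega)
    omega
  have hc1mem : ∀ m, m ≤ t → cyc x y1 z k m ∈ E := fun m hm => cyc_mem_E ht hk' hx hy1E hzE hm
  have hc2mem : ∀ m, m ≤ t → cyc x y2 z k m ∈ E := fun m hm => cyc_mem_E ht hk' hx hy2E hzE hm
  have hc1card : ∀ m, m ≤ t → (cyc x y1 z k m).card = 3 := fun m hm => hE _ (hc1mem m hm)
  have hc2card : ∀ m, m ≤ t → (cyc x y2 z k m).card = 3 := fun m hm => hE _ (hc2mem m hm)
  have hadjS1 : ∀ a, a ≤ t → (cyc x y1 z k a ∩ cyc x y1 z k ((a+1) % (t+1))).card = 1 := by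
    intro a ha
    rw [cyc_inter_card hk' hw1 ha (hmodle a)]
    exact J_succ ht hk' ha
  have hadjS2 : ∀ a, a ≤ t → (cyc x y2 z k a ∩ cyc x y2 z k ((a+1) % (t+1))).card = 1 := by
    intro a ha
    rw [cyc_inter_card hk' hw2 ha (hmodle a)]
    exact J_succ ht hk' ha
  have hadj01 : ∀ a b, a ≤ t → b ≤ t → a ≠ b → b ≠ (a+1) % (t+1) → a ≠ (b+1) % (t+1) →
      cyc x y1 z k a ∩ cyc x y1 z k b = ∅ := by
    intro a b ha hb hab hab1 hab2
    rw [cyc_inter hk' hw1 ha hb, J_nonadj ht hk' ha hb hab hab1 hab2, Finset.image_empty]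
  have hadj02 : ∀ a b, a ≤ t → b ≤ t → a ≠ b → b ≠ (a+1) % (t+1) → a ≠ (b+1) % (t+1) →
      cyc x y2 z k a ∩ cyc x y2 z k b = ∅ := by
    intro a b ha hb hab hab1 hab2
    rw [cyc_inter hk' hw2 ha hb, J_nonadj ht hk' ha hb hab hab1 hab2, Finset.image_empty]
  have hsmall1 : ∀ a b, a ≤ t → b ≤ t → a ≠ b → (cyc x y1 z k a ∩ cyc x y1 z k b).card ≤ 1 := by
    intro a b ha hb hab
    rw [cyc_inter_card hk' hw1 ha hb]
    exact J_small ht hk' ha hb hab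
  have hsmall2 : ∀ a b, a ≤ t → b ≤ t → a ≠ b → (cyc x y2 z k a ∩ cyc x y2 z k b).card ≤ 1 := by
    intro a b ha hb hab
    rw [cyc_inter_card hk' hw2 ha hb]
    exact J_small ht hk' ha hb hab
  -- Claim C1 : every edge containing y1 lies in {y1} ∪ S
  have hC1 : ∀ e, e ∈ E → y1 ∈ e → e.erase y1 ⊆ S := by
    intro e heE hy1e v hv
    obtain ⟨hvne, hve⟩ := Finset.mem_erase.1 hv
    by_contra hvS
    have hecard : e.card = 3 := hE e heE
    have h2 : ((e.erase y1).erase v).card = 1 := by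
      rw [Finset.card_erase_of_mem hv, Finset.card_erase_of_mem hy1e, hecard]
    obtain ⟨u, hu⟩ := Finset.card_eq_one.1 h2
    have huee : u ∈ (e.erase y1).erase v := by rw [hu]; exact Finset.mem_singleton_self u
    have hue : u ∈ e := Finset.mem_of_mem_erase (Finset.mem_of_mem_erase huee)
    have huy1 : u ≠ y1 := (Finset.mem_erase.1 (Finset.mem_of_mem_erase huee)).1
    have hmem_e : ∀ a, a ∈ e → a = y1 ∨ a = v ∨ a = u := by
      intro a hae
      by_cases ha1 : a = y1
      · exact Or.inl ha1
      by_cases ha2 : a = v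
      · exact Or.inr (Or.inl ha2)
      refine Or.inr (Or.inr ?_)
      have : a ∈ (e.erase y1).erase v :=
        Finset.mem_erase.2 ⟨ha2, Finset.mem_erase.2 ⟨ha1, hae⟩⟩
      rw [hu] at this
      exact Finset.mem_singleton.1 this
    by_cases huS : u ∈ S
    · -- extension at u on the cycle through y2
      have hp : ∃ p, p ≤ 2*t+2 ∧ p ≠ 2*k+1 ∧ wmap x y2 z p = u := by
        rw [hSdef] at huS
        simp only [Finset.mem_insert] at huS
        rcases huS with rfl | rfl | hXm
        · exact ⟨2*t+2, by omega, by omega, wmap_z x y2 u⟩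
        · exact ⟨2*t+1, by omega, by omega, wmap_y x u z⟩
        · rw [hX'] at hXm
          obtain ⟨i, -, hi⟩ := Finset.mem_image.1 (Finset.mem_of_mem_erase hXm)
          refine ⟨i.val, by have := i.isLt; omega, ?_, ?_⟩
          · intro hcon
            apply (Finset.mem_erase.1 hXm).1
            rw [← hi]
            congr 1
            exact Fin.ext hcon
          · rw [wmap_lt x y2 z i.isLt, ← hi]
      obtain ⟨p, hple, hpne, hpw⟩ := hp
      obtain ⟨r, hr, hpJ, hpJ'⟩ := Jloc ht hk' hple hpne
      have hs'le : (r + t) % (t+1) ≤ t := by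
        have := Nat.mod_lt (r+t) (y := t+1) (by omega)
        omega
      refine ext_cycle ht hfree (cyc x y2 z k) hc2mem hc2card hadjS2 hadj02 hsmall2
        heE hecard hue hs'le ?_ ?_ ?_
      · rw [shift1 hr]
        exact Finset.mem_image.2 ⟨p, hpJ, hpw⟩
      · rw [shift2]
        intro hcon
        obtain ⟨q, hq, hqw⟩ := Finset.mem_image.1 hcon
        have hq' : q ≤ 2*t+2 := J_range hk' (hmodle r) hq
        have hqp : q = p := hw2 q p (by omega) (by omega) (by rw [hqw, hpw])
        rw [hqp] at hq
        exact hpJ' hq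
      · intro m hm hms v' hv'
        rw [Finset.mem_inter] at hv'
        obtain ⟨hv'e, hv'c⟩ := hv'
        rcases hmem_e v' hv'e with rfl | rfl | rfl
        · exfalso
          rcases mem_cyc_cases ht hk' hm hv'c with ⟨j, hj, hjne, hjJ, hjx⟩ | ⟨-, hyy⟩ | ⟨-, hzz⟩
          · exact hy1P _ hjx
          · exact h12 hyy
          · exact h1z hzz
        · exfalso
          apply hvS
          rcases mem_cyc_cases ht hk' hm hv'c with ⟨j, hj, hjne, hjJ, hjx⟩ | ⟨-, hyy⟩ | ⟨-, hzz⟩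
          · rw [hjx]; exact hXS (hXmem j hj hjne)
          · rw [hyy]; exact hy2S
          · rw [hzz]; exact hzS
        · exact Finset.mem_singleton.2 rfl
    · -- extension at the pendant y1 on the cycle through y1
      refine ext_cycle ht hfree (cyc x y1 z k) hc1mem hc1card hadjS1 hadj01 hsmall1
        heE hecard hy1e (show t-1 ≤ t by omega) ?_ ?_ ?_
      · rw [show (t-1+1) % (t+1) = t by
          rw [show t-1+1 = t by omega]; exact Nat.mod_eq_of_lt (by omega)]
        exact Finset.mem_image.2 ⟨2*t+1, by rw [mem_Jf hk' le_rfl]; omega, wmap_y x y1 z⟩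
      · rw [show (t-1+2) % (t+1) = 0 by rw [show t-1+2 = t+1 by omega]; exact Nat.mod_self _]
        intro hcon
        rcases mem_cyc_cases ht hk' (show (0:ℕ) ≤ t by omega) hcon with
          ⟨j, hj, hjne, hjJ, hjx⟩ | ⟨hJ, -⟩ | ⟨-, hzz⟩
        · exact hy1P _ hjx
        · rw [mem_Jf hk' (by omega)] at hJ; omega
        · exact h1z hzz
      · intro m hm hms v' hv'
        rw [Finset.mem_inter] at hv'
        obtain ⟨hv'e, hv'c⟩ := hv'
        rcases hmem_e v' hv'e with rfl | rfl | rfl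
        · exact Finset.mem_singleton.2 rfl
        · exfalso
          apply hvS
          rcases mem_cyc_cases ht hk' hm hv'c with ⟨j, hj, hjne, hjJ, hjx⟩ | ⟨-, hyy⟩ | ⟨-, hzz⟩
          · rw [hjx]; exact hXS (hXmem j hj hjne)
          · exact absurd hyy hvne
          · rw [hzz]; exact hzS
        · exfalso
          apply huS
          rcases mem_cyc_cases ht hk' hm hv'c with ⟨j, hj, hjne, hjJ, hjx⟩ | ⟨-, hyy⟩ | ⟨-, hzz⟩
          · rw [hjx]; exact hXS (hXmem j hj hjne)
          · exact absurd hyy huy1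
          · rw [hzz]; exact hzS
  -- Claim C2 : {y1, x0, y2} is not an edge
  have hC2 : ({y1, x0, y2} : Finset V) ∉ E := by
    intro heE
    have hy1e : y1 ∈ ({y1, x0, y2} : Finset V) := by simp
    have hecard := hE _ heE
    have hx0mem : x0 ∈ ({y1, x0, y2} : Finset V) := by simp
    refine ext_cycle ht hfree (cyc x y1 z k) hc1mem hc1card hadjS1 hadj01 hsmall1
      heE hecard hx0mem (le_refl t) ?_ ?_ ?_
    · rw [Nat.mod_self]
      refine Finset.mem_image.2 ⟨0, by rw [mem_Jf hk' (by omega)]; omega, ?_⟩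
      rw [wmap_lt x y1 z hx0, hx0def]
    · rw [show (t+2) % (t+1) = 1 by
        rw [show t+2 = 1+(t+1) by omega, Nat.add_mod_right]; exact Nat.mod_eq_of_lt (by omega)]
      intro hcon
      rcases mem_cyc_cases ht hk' (show (1:ℕ) ≤ t by omega) hcon with
        ⟨j, hj, hjne, hjJ, hjx⟩ | ⟨-, hyy⟩ | ⟨-, hzz⟩
      · have hj0 : (⟨0, hx0⟩ : Fin (2*t+1)) = ⟨j, hj⟩ := hxinj (by rw [← hjx, hx0def])
        have : j = 0 := (Fin.mk.inj_iff.1 hj0).symm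
        rw [this, mem_Jf hk' (show (1:ℕ) ≤ t by omega)] at hjJ
        omega
      · exact hy1P _ (by rw [← hyy, hx0def])
      · exact hzP _ (by rw [← hzz, hx0def])
    · intro m hm hms v' hv'
      rw [Finset.mem_inter] at hv'
      obtain ⟨hv'e, hv'c⟩ := hv'
      have hv'cases : v' = y1 ∨ v' = x0 ∨ v' = y2 := by
        simpa using hv'e
      rcases hv'cases with rfl | rfl | rfl
      · exfalso
        rcases mem_cyc_cases ht hk' hm hv'c with ⟨j, hj, hjne, hjJ, hjx⟩ | ⟨hJ, -⟩ | ⟨-, hzz⟩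
        · exact hy1P _ hjx
        · rw [mem_Jf hk' hm] at hJ; omega
        · exact h1z hzz
      · exact Finset.mem_singleton.2 rfl
      · exfalso
        rcases mem_cyc_cases ht hk' hm hv'c with ⟨j, hj, hjne, hjJ, hjx⟩ | ⟨-, hyy⟩ | ⟨-, hzz⟩
        · exact hy2P _ hjx
        · exact h12 hyy.symm
        · exact h2z hzz
  -- cardinality of S
  have hX'card : X'.card = 2*t := by
    rw [hX', Finset.card_erase_of_mem (Finset.mem_image_of_mem x (Finset.mem_univ _)),
      Finset.card_image_of_injective _ hxinj, Finset.card_univ, Fintype.card_fin]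
    omega
  have hScard : S.card = 2*t+2 := by
    have hz2 : z ∉ insert y2 X' := by
      simp only [Finset.mem_insert]
      push_neg
      exact ⟨fun h => h2z h.symm, hzX⟩
    rw [hSdef, Finset.card_insert_of_notMem hz2, Finset.card_insert_of_notMem hy2X, hX'card]
  have hx0y2 : x0 ≠ y2 := by
    rw [hx0def]
    exact fun h => hy2P _ h.symm
  have hx0S : x0 ∈ S := hXS (by rw [hx0def]; exact hXmem 0 hx0 (by omega))
  -- counting
  have hpair_mem : ({x0, y2} : Finset V) ∈ S.powersetCard 2 := by
    rw [Finset.mem_powersetCard]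
    constructor
    · intro a ha
      simp only [Finset.mem_insert, Finset.mem_singleton] at ha
      rcases ha with rfl | rfl
      exacts [hx0S, hy2S]
    · rw [Finset.card_insert_of_notMem (by simp [hx0y2]), Finset.card_singleton]
  have htarget : ((S.powersetCard 2).erase ({x0, y2} : Finset V)).card = (t+1)*(2*t+1) - 1 := by
    rw [Finset.card_erase_of_mem hpair_mem, Finset.card_powersetCard, hScard]
    have hch : (2*t+2).choose 2 = (t+1)*(2*t+1) := by
      rw [Nat.choose_two_right]
      have h2' : (2*t+2) * (2*t+2-1) = 2*((t+1)*(2*t+1)) := by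
        have : 2*t+2-1 = 2*t+1 := by omega
        rw [this]; ring
      rw [h2', Nat.mul_div_cancel_left _ (by norm_num)]
    rw [hch]
  have hbound : (E.filter (fun e => y1 ∈ e)).card ≤ (t+1)*(2*t+1) - 1 := by
    rw [← htarget]
    refine Finset.card_le_card_of_injOn (fun e => e.erase y1) ?_ ?_
    · intro e he'
      rw [Finset.mem_coe, Finset.mem_filter] at he'
      obtain ⟨heE, hy1e⟩ := he'
      dsimp only
      rw [Finset.mem_coe, Finset.mem_erase]
      constructor
      · intro hcon
        apply hC2
        have heq : e = insert y1 (e.erase y1) := (Finset.insert_erase hy1e).symm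
        rw [hcon] at heq
        rw [← heq]
        exact heE
      · rw [Finset.mem_powersetCard]
        exact ⟨hC1 e heE hy1e, by rw [Finset.card_erase_of_mem hy1e, hE e heE]⟩
    · intro e1 h1 e2 h2 heq
      dsimp only at heq
      rw [Finset.mem_coe, Finset.mem_filter] at h1 h2
      rw [← Finset.insert_erase h1.2, heq, Finset.insert_erase h2.2]
  have hdeg1 := hdeg y1
  unfold hdegree at hdeg1
  have hQ := gQ_big (t := t) (n := n) ht hn
  have hcast : ((E.filter (fun e => y1 ∈ e)).card : ℚ) ≤ (((t+1)*(2*t+1) - 1 : ℕ) : ℚ) :=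
    Nat.cast_le.2 hbound
  linarith

lemma rev_path {V : Type*} [DecidableEq V] {E : Finset (Finset V)} {t : ℕ} (ht : 1 ≤ t)
    {x : Fin (2*t+1) → V} (hx : IsLinearPathSeq E t x) :
    IsLinearPathSeq E t (fun i : Fin (2*t+1) => x ⟨2*t - i.val, by omega⟩) := by
  constructor
  · intro a b hab
    dsimp only at hab
    have h2 := Fin.mk.inj_iff.1 (hx.1 hab)
    have ha := a.isLt
    have hb := b.isLt
    exact Fin.ext (by omega)
  · intro i
    have hi := i.isLt
    dsimp only
    have hswap : ∀ a b c : V, ({a, b, c} : Finset V) = {c, b, a} := by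
      intro a b c
      ext v
      simp only [Finset.mem_insert, Finset.mem_singleton]
      tauto
    rw [hswap]
    have e1 : (⟨2*t - (2*i.val+2), by omega⟩ : Fin (2*t+1)) = ⟨2*(t-1-i.val), by omega⟩ :=
      Fin.ext (show 2*t - (2*i.val+2) = 2*(t-1-i.val) by omega)
    have e2 : (⟨2*t - (2*i.val+1), by omega⟩ : Fin (2*t+1)) = ⟨2*(t-1-i.val)+1, by omega⟩ :=
      Fin.ext (show 2*t - (2*i.val+1) = 2*(t-1-i.val)+1 by omega)
    have e3 : (⟨2*t - 2*i.val, by omega⟩ : Fin (2*t+1)) = ⟨2*(t-1-i.val)+2, by omega⟩ :=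
      Fin.ext (show 2*t - 2*i.val = 2*(t-1-i.val)+2 by omega)
    rw [e1, e2, e3]
    exact hx.2 ⟨t-1-i.val, by omega⟩

lemma rev_fresh {V : Type*} {t : ℕ} {x : Fin (2*t+1) → V} {v : V} :
    (∀ i : Fin (2*t+1), v ≠ (fun j : Fin (2*t+1) => x ⟨2*t - j.val, by omega⟩) i) ↔
    (∀ i : Fin (2*t+1), v ≠ x i) := by
  constructor <;> intro h i
  · have hi := i.isLt
    have h2 := h ⟨2*t - i.val, by omega⟩
    dsimp only at h2
    have hidx : (⟨2*t - (2*t - i.val), by omega⟩ : Fin (2*t+1)) = i :=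
      Fin.ext (show 2*t - (2*t - i.val) = i.val by omega)
    rwa [hidx] at h2
  · exact h _

lemma dP_revA {V : Type*} [Fintype V] [DecidableEq V] (E : Finset (Finset V)) {t k : ℕ}
    (ht : 3 ≤ t) (hk : k ≤ t-1) (x : Fin (2*t+1) → V) :
    dP E (fun i : Fin (2*t+1) => x ⟨2*t - i.val, by omega⟩) ⟨0, by omega⟩
        ⟨2*(t-1-k)+2, by omega⟩
      = dP E x ⟨2*t, by omega⟩ ⟨2*k, by omega⟩ := by
  unfold dP
  congr 1
  ext v
  simp only [Finset.mem_filter, Finset.mem_univ, true_and]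
  refine and_congr rev_fresh ?_
  have hA : x (⟨2*t - 0, by omega⟩ : Fin (2*t+1)) = x ⟨2*t, by omega⟩ :=
    congrArg x (Fin.ext (show 2*t - 0 = 2*t by omega))
  have hB : x (⟨2*t - (2*(t-1-k)+2), by omega⟩ : Fin (2*t+1)) = x ⟨2*k, by omega⟩ :=
    congrArg x (Fin.ext (show 2*t - (2*(t-1-k)+2) = 2*k by omega))
  rw [hA, hB]

lemma dP_revB {V : Type*} [Fintype V] [DecidableEq V] (E : Finset (Finset V)) {t k : ℕ}
    (ht : 3 ≤ t) (hk : k ≤ t-1) (x : Fin (2*t+1) → V) :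
    dP E (fun i : Fin (2*t+1) => x ⟨2*t - i.val, by omega⟩) ⟨2*t, by omega⟩
        ⟨2*(t-1-k), by omega⟩
      = dP E x ⟨0, by omega⟩ ⟨2*k+2, by omega⟩ := by
  unfold dP
  congr 1
  ext v
  simp only [Finset.mem_filter, Finset.mem_univ, true_and]
  refine and_congr rev_fresh ?_
  have hA : x (⟨2*t - 2*t, by omega⟩ : Fin (2*t+1)) = x ⟨0, by omega⟩ :=
    congrArg x (Fin.ext (show 2*t - 2*t = 0 by omega))
  have hB : x (⟨2*t - 2*(t-1-k), by omega⟩ : Fin (2*t+1)) = x ⟨2*k+2, by omega⟩ :=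
    congrArg x (Fin.ext (show 2*t - 2*(t-1-k) = 2*k+2 by omega))
  rw [hA, hB]

end LPAux

theorem dP_even_sum_le_four
    (t n : ℕ) (ht : t ≥ 3) (hn : n ≥ 2 * t + 17)
    (V : Type*) [Fintype V] [DecidableEq V] (hV : Fintype.card V = n)
    (E : Finset (Finset V)) (hE : ∀ e ∈ E, e.card = 3)
    (hdeg : ∀ v : V, gQ n t ≤ (hdegree E v : ℚ))
    (hfree : ¬ HasLinearPath E (t + 1))
    (x : Fin (2 * t + 1) → V) (hx : IsLinearPathSeq E t x)
    (k : ℕ) (hk : k ≤ t - 1)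
    (h0 : 0 < dP E x ⟨0, by omega⟩ ⟨2 * k + 2, by omega⟩)
    (h2t : 0 < dP E x ⟨2 * t, by omega⟩ ⟨2 * k, by omega⟩) :
    dP E x ⟨0, by omega⟩ ⟨2 * k + 2, by omega⟩ +
      dP E x ⟨2 * t, by omega⟩ ⟨2 * k, by omega⟩ ≤ 4 := by
  by_contra hcon
  push_neg at hcon
  have ht' : 3 ≤ t := ht
  have hn' : 2*t+17 ≤ n := hn
  have hsplit : 3 ≤ dP E x ⟨0, by omega⟩ ⟨2*k+2, by omega⟩ ∨
      3 ≤ dP E x ⟨2*t, by omega⟩ ⟨2*k, by omega⟩ := by omega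
  rcases hsplit with h | h
  · exact LPAux.core ht' hn' hE hdeg hfree hx hk h (by omega)
  · refine LPAux.core (k := t-1-k) ht' hn' hE hdeg hfree
      (LPAux.rev_path (by omega) hx) (by omega) ?_ ?_
    · rw [LPAux.dP_revA E ht' hk x]
      exact h
    · rw [LPAux.dP_revB E ht' hk x]
      omega
end

section
/- Let t ≥ 3 and n ≥ 2t + 17 be integers, and let H be a 3-uniform hypergraph on n vertices with minimum degree δ₁(H) ≥ g(n,t) that contains no linear path of length t + 1. Let P = (x₀, x₁, ..., x_{2t}) be a linear path of length t in H. If there are some k ∈ [0, t−1] and some ℓ ∈ {0, t} such that d_P(2k, 2k+2) > 0 and d_P(2ℓ, 2k+1) > 0, then d_P(2k, 2k+2) + d_P(2ℓ, 2k+1) ≤ 2. -/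
/-!
If `y` is counted by `d_P(2k, 2k+2)` and `z ≠ y` by `d_P(0, 2k+1)`, then replacing the edge
`{x_{2k}, x_{2k+1}, x_{2k+2}}` by `{x_{2k}, y, x_{2k+2}}` frees `x_{2k+1}`, and the edge
`{z, x_{2k+1}, x_0}` prepends to give a linear path of length `t + 1`. So in a path-free
hypergraph every vertex counted by one side equals every vertex counted by the other: when both
are positive, both are `1`. The case `ℓ = t` is the case `ℓ = 0` for the reversed path.
-/

section LinearPath

variable {V : Type*} [DecidableEq V] {E : Finset (Finset V)}

/-- Edge `i` of the path is the image of the index window `[2i, 2i+2]`; since `w` is injective,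
intersections of edges are images of intersections of windows. -/
theorem IsLinearPathSeq.hasLinearPath {m : ℕ} {w : Fin (2 * m + 1) → V}
    (hw : IsLinearPathSeq E m w) : HasLinearPath E m := by
  let S : Fin m → Finset (Fin (2 * m + 1)) :=
    fun i => Finset.univ.filter fun a => 2 * (i : ℕ) ≤ a ∧ (a : ℕ) ≤ 2 * i + 2
  have hS : ∀ i : Fin m,
      S i = {⟨2 * i, by omega⟩, ⟨2 * i + 1, by omega⟩, ⟨2 * i + 2, by omega⟩} := by
    intro i
    ext a
    simp only [S, Finset.mem_filter, Finset.mem_univ, true_and, Finset.mem_insert,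
      Finset.mem_singleton, Fin.ext_iff]
    omega
  refine ⟨fun i => (S i).image w, ?_, fun i => ?_,
    fun i j hij => ⟨fun hadj => ?_, fun hadj => ?_⟩⟩
  · intro i j h
    have hmem : (⟨2 * i + 1, by omega⟩ : Fin (2 * m + 1)) ∈ S j := by
      rw [← Finset.image_injective hw.1 h, hS]; simp
    simp only [S, Finset.mem_filter, Finset.mem_univ, true_and] at hmem
    exact Fin.ext (by omega)
  · simpa [hS] using hw.2 i
  · rw [← Finset.image_inter _ _ hw.1, Finset.card_image_of_injective _ hw.1, Finset.card_eq_one]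
    refine ⟨⟨2 * max (i : ℕ) j, by omega⟩, ?_⟩
    ext a
    simp only [S, Finset.mem_inter, Finset.mem_filter, Finset.mem_univ, true_and,
      Finset.mem_singleton, Fin.ext_iff]
    omega
  · rw [← Finset.image_inter _ _ hw.1, Finset.image_eq_empty]
    ext a
    simp only [S, Finset.mem_inter, Finset.mem_filter, Finset.mem_univ, true_and,
      Finset.notMem_empty, iff_false]
    omega

theorem IsLinearPathSeq.comp_rev {t : ℕ} {x : Fin (2 * t + 1) → V}
    (hx : IsLinearPathSeq E t x) : IsLinearPathSeq E t (x ∘ Fin.rev) := by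
  refine ⟨hx.1.comp Fin.rev_injective, fun i => ?_⟩
  have hedge := hx.2 i.rev
  simp only [Fin.val_rev] at hedge
  convert hedge using 1
  simp only [Function.comp_apply]
  rw [Finset.insert_comm, Finset.pair_comm, Finset.insert_comm]
  congr 3 <;> (try congr 1) <;> ext <;> simp only [Fin.val_rev] <;> omega

/-- The sequence `(z, x_{2k+1}, x_0, …, x_{2k}, y, x_{2k+2}, …, x_{2t})`: the edge
`{x_{2k}, x_{2k+1}, x_{2k+2}}` is replaced by `{x_{2k}, y, x_{2k+2}}`, and the freed vertex
`x_{2k+1}` joins a new first edge `{z, x_{2k+1}, x_0}`. -/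
def rerouteSeq {t : ℕ} (x : Fin (2 * t + 1) → V) (k : Fin t) (y z : V) :
    Fin (2 * (t + 1) + 1) → V := fun j =>
  if (j : ℕ) = 0 then z
  else if (j : ℕ) = 1 then x ⟨2 * k + 1, by omega⟩
  else if (j : ℕ) = 2 * k + 3 then y
  else x ⟨j - 2, by omega⟩

theorem IsLinearPathSeq.rerouteSeq {t : ℕ} {x : Fin (2 * t + 1) → V}
    (hx : IsLinearPathSeq E t x) (k : Fin t) {y z : V}
    (hy : ∀ i, y ≠ x i) (hz : ∀ i, z ≠ x i) (hyz : y ≠ z)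
    (hyE : ({x ⟨2 * k, by omega⟩, x ⟨2 * k + 2, by omega⟩, y} : Finset V) ∈ E)
    (hzE : ({x ⟨0, by omega⟩, x ⟨2 * k + 1, by omega⟩, z} : Finset V) ∈ E) :
    IsLinearPathSeq E (t + 1) (rerouteSeq x k y z) := by
  refine ⟨fun a b hab => ?_, fun i => ?_⟩
  · simp only [_root_.rerouteSeq] at hab
    have hxinj : ∀ {p q} (hp : p < 2 * t + 1) (hq : q < 2 * t + 1),
        x ⟨p, hp⟩ = x ⟨q, hq⟩ → p = q :=
      fun _ _ h => Fin.val_eq_of_eq (hx.1 h)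
    split_ifs at hab <;> first
      | exact Fin.ext (by omega)
      | exact absurd hab hyz | exact absurd hab.symm hyz
      | exact absurd hab (hy _) | exact absurd hab.symm (hy _)
      | exact absurd hab (hz _) | exact absurd hab.symm (hz _)
      | exact Fin.ext (by have := hxinj _ _ hab; omega)
  · rcases i with ⟨_ | i, hi⟩
    · simp only [_root_.rerouteSeq]
      convert hzE using 1
      rw [Finset.insert_comm, Finset.pair_comm, Finset.insert_comm]
      rfl
    · simp only [_root_.rerouteSeq]
      split_ifs <;> (try contradiction) <;> (try omega)
      · rw [Finset.pair_comm]
        convert hyE using 3 <;> simp only [hx.1.eq_iff, Fin.ext_iff] <;> omega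
      · convert hx.2 ⟨i, by omega⟩ using 3 <;>
          simp only [Finset.singleton_inj, hx.1.eq_iff, Fin.ext_iff] <;> omega

theorem IsLinearPathSeq.eq_of_not_hasLinearPath_succ_head {t : ℕ} {x : Fin (2 * t + 1) → V}
    (hx : IsLinearPathSeq E t x) (hfree : ¬ HasLinearPath E (t + 1)) (k : Fin t) {y z : V}
    (hy : ∀ i, y ≠ x i) (hz : ∀ i, z ≠ x i)
    (hyE : ({x ⟨2 * k, by omega⟩, x ⟨2 * k + 2, by omega⟩, y} : Finset V) ∈ E)
    (hzE : ({x ⟨0, by omega⟩, x ⟨2 * k + 1, by omega⟩, z} : Finset V) ∈ E) :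
    y = z :=
  by_contra fun hyz => hfree (hx.rerouteSeq k hy hz hyz hyE hzE).hasLinearPath

theorem IsLinearPathSeq.eq_of_not_hasLinearPath_succ_last {t : ℕ} {x : Fin (2 * t + 1) → V}
    (hx : IsLinearPathSeq E t x) (hfree : ¬ HasLinearPath E (t + 1)) (k : Fin t) {y z : V}
    (hy : ∀ i, y ≠ x i) (hz : ∀ i, z ≠ x i)
    (hyE : ({x ⟨2 * k, by omega⟩, x ⟨2 * k + 2, by omega⟩, y} : Finset V) ∈ E)
    (hzE : ({x ⟨2 * t, by omega⟩, x ⟨2 * k + 1, by omega⟩, z} : Finset V) ∈ E) :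
    y = z := by
  refine hx.comp_rev.eq_of_not_hasLinearPath_succ_head hfree k.rev (fun i => hy _) (fun i => hz _)
    ?_ ?_
  · rw [Finset.insert_comm]
    convert hyE using 3 <;> simp only [Function.comp_apply, hx.1.eq_iff, Fin.ext_iff,
      Fin.val_rev] <;> omega
  · convert hzE using 3 <;> simp only [Function.comp_apply, hx.1.eq_iff, Fin.ext_iff,
      Fin.val_rev] <;> omega

end LinearPath

theorem dP_add_dP_le_two_of_forall_eq {V : Type*} [Fintype V] [DecidableEq V]
    {E : Finset (Finset V)} {t : ℕ} {x : Fin (2 * t + 1) → V} {a b c d : Fin (2 * t + 1)}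
    (hab : 0 < dP E x a b) (hcd : 0 < dP E x c d)
    (h : ∀ y z, (∀ i, y ≠ x i) → ({x a, x b, y} : Finset V) ∈ E →
      (∀ i, z ≠ x i) → ({x c, x d, z} : Finset V) ∈ E → y = z) :
    dP E x a b + dP E x c d ≤ 2 := by
  obtain ⟨y₀, hy₀⟩ := Finset.card_pos.mp hab
  obtain ⟨z₀, hz₀⟩ := Finset.card_pos.mp hcd
  simp only [Finset.mem_filter, Finset.mem_univ, true_and] at hy₀ hz₀
  have hab_le : dP E x a b ≤ 1 := Finset.card_le_one.mpr fun y hy y' hy' => by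
    simp only [Finset.mem_filter, Finset.mem_univ, true_and] at hy hy'
    rw [h y z₀ hy.1 hy.2 hz₀.1 hz₀.2, h y' z₀ hy'.1 hy'.2 hz₀.1 hz₀.2]
  have hcd_le : dP E x c d ≤ 1 := Finset.card_le_one.mpr fun z hz z' hz' => by
    simp only [Finset.mem_filter, Finset.mem_univ, true_and] at hz hz'
    rw [← h y₀ z hy₀.1 hy₀.2 hz.1 hz.2, ← h y₀ z' hy₀.1 hy₀.2 hz'.1 hz'.2]
  omega

theorem dP_consecutive_sum_le_two
    (t : ℕ) (ht : t ≥ 3)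
    (V : Type*) [Fintype V] [DecidableEq V]
    (E : Finset (Finset V))
    (hfree : ¬ HasLinearPath E (t + 1))
    (x : Fin (2 * t + 1) → V) (hx : IsLinearPathSeq E t x)
    (k : ℕ) (hk : k ≤ t - 1) (l : ℕ) (hl : l = 0 ∨ l = t)
    (h1 : 0 < dP E x ⟨2 * k, by omega⟩ ⟨2 * k + 2, by omega⟩)
    (h2 : 0 < dP E x ⟨2 * l, by omega⟩ ⟨2 * k + 1, by omega⟩) :
    dP E x ⟨2 * k, by omega⟩ ⟨2 * k + 2, by omega⟩ +
      dP E x ⟨2 * l, by omega⟩ ⟨2 * k + 1, by omega⟩ ≤ 2 := by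
  refine dP_add_dP_le_two_of_forall_eq h1 h2 fun y z hy hyE hz hzE => ?_
  have hkt : k < t := by omega
  rcases hl with rfl | rfl
  · exact hx.eq_of_not_hasLinearPath_succ_head hfree ⟨k, hkt⟩ hy hz hyE hzE
  · exact hx.eq_of_not_hasLinearPath_succ_last hfree ⟨k, hkt⟩ hy hz hyE hzE
end

section
/- Let G be a connected graph on n vertices with minimum degree at least d. If n ≤ 2d, then G contains a Hamiltonian path, i.e., a path through all n vertices. -/
open List

section Helpers
variable {V : Type*} [DecidableEq V]

/-- Rotating a "cyclic chain" preserves the cyclic chain property. -/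
private lemma cyc_rotate (R : V → V → Prop) :
    ∀ (n : ℕ) (l : List V), l.Chain' R →
      (∀ x ∈ l.getLast?, ∀ y ∈ l.head?, R x y) →
      (l.rotate n).Chain' R ∧
        ∀ x ∈ (l.rotate n).getLast?, ∀ y ∈ (l.rotate n).head?, R x y := by
  intro n
  induction n with
  | zero => intro l h1 h2; simpa using ⟨h1, h2⟩
  | succ n ih =>
    intro l h1 h2
    have : l.rotate (n+1) = (l.rotate n).rotate 1 := by
      rw [rotate_rotate]
    rw [this]
    obtain ⟨h1, h2⟩ := ih l h1 h2
    set m := l.rotate n with hm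
    clear_value m
    clear this ih
    match m, h1 with
    | [], _ => simpa [List.Chain'] using h2
    | [a], _ => simpa [List.Chain'] using h2
    | a :: b :: t, h1 =>
      rw [List.Chain', List.isChain_cons_cons] at h1
      have hr : (a :: b :: t).rotate 1 = (b :: t) ++ [a] := by
        simp [rotate_cons_succ]
      rw [hr]
      constructor
      · refine List.IsChain.append h1.2 (by simp) ?_
        intro x hx y hy
        simp only [head?_cons, Option.mem_def, Option.some.injEq] at hy
        subst hy
        have : (a :: b :: t).getLast? = (b :: t).getLast? := by
          simp [List.getLast?_cons_cons]
        apply h2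
        · rw [this]; exact hx
        · simp
      · intro x hx y hy
        rw [List.getLast?_append_of_ne_nil _ (by simp)] at hx
        simp only [getLast?_singleton, Option.mem_def, Option.some.injEq] at hx
        subst hx
        simp only [cons_append, head?_cons, Option.mem_def, Option.some.injEq] at hy
        subst hy
        exact h1.1

variable {G : SimpleGraph V}

lemma cross_edge {l : List V} : ∀ {u v : V}, G.Walk u v → u ∉ l → v ∈ l →
    ∃ x y, x ∉ l ∧ y ∈ l ∧ G.Adj x y := by
  intro u v p
  induction p with
  | nil => intro hu hv; exact absurd hv hu
  | @cons _ w _ h p ih =>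
    intro hu hv
    by_cases hw : w ∈ l
    · exact ⟨_, _, hu, hw, h⟩
    · exact ih hw hv

lemma walk_of_chain : ∀ (l : List V), l.Chain' G.Adj → ∀ h : l ≠ [],
    ∃ v, ∃ p : G.Walk (l.head h) v, p.support = l := by
  intro l
  induction l with
  | nil => intro _ h; simp at h
  | cons a t ih =>
    intro hc _
    match t, hc with
    | [], _ => exact ⟨a, SimpleGraph.Walk.nil, rfl⟩
    | b :: t, hc =>
      rw [List.Chain', List.isChain_cons_cons] at hc
      obtain ⟨v, p, hp⟩ := ih hc.2 (by simp)
      exact ⟨v, SimpleGraph.Walk.cons hc.1 p, congrArg (a :: ·) hp⟩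

lemma head_rotate {l : List V} {k : ℕ} (hk : k < l.length) :
    ∃ r, l.rotate k = l[k] :: r := by
  rw [List.rotate_eq_drop_append_take hk.le, List.drop_eq_getElem_cons hk, cons_append]
  exact ⟨_, rfl⟩

end Helpers

section Grow
variable {V : Type*} [Fintype V] [DecidableEq V]

lemma grow (G : SimpleGraph V) [DecidableRel G.Adj]
    (d : ℕ) (hconn : G.Connected) (hdeg : ∀ v : V, d ≤ G.degree v)
    (hcard : Fintype.card V ≤ 2 * d)
    (cyc_rotate : ∀ (R : V → V → Prop) (n : ℕ) (l : List V), l.Chain' R →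
      (∀ x ∈ l.getLast?, ∀ y ∈ l.head?, R x y) →
      (l.rotate n).Chain' R ∧
        ∀ x ∈ (l.rotate n).getLast?, ∀ y ∈ (l.rotate n).head?, R x y)
    (cross_edge : ∀ {l : List V} {u v : V}, G.Walk u v → u ∉ l → v ∈ l →
      ∃ x y, x ∉ l ∧ y ∈ l ∧ G.Adj x y)
    (head_rotate : ∀ {l : List V} {k : ℕ}, (hk : k < l.length) →
      ∃ r, l.rotate k = l[k] :: r)
    (l : List V) (hne : l ≠ []) (hchain : l.Chain' G.Adj) (hnd : l.Nodup)
    (hlen : l.length < Fintype.card V) :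
    ∃ l' : List V, l' ≠ [] ∧ l'.Chain' G.Adj ∧ l'.Nodup ∧
      l'.length = l.length + 1 := by
  set n := Fintype.card V with hn
  set m := l.length with hm
  set a := l.head hne with ha
  set b := l.getLast hne with hb
  have hm1 : 1 ≤ m := by
    rw [hm, Nat.one_le_iff_ne_zero]
    simpa using hne
  by_cases hA : ∃ x, G.Adj a x ∧ x ∉ l
  · obtain ⟨x, hx, hxl⟩ := hA
    refine ⟨x :: l, by simp, ?_, by simp [hnd, hxl], by simp [hm]⟩
    rw [List.Chain', List.isChain_cons]
    refine ⟨?_, hchain⟩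
    intro y hy
    rw [List.head?_eq_head hne] at hy
    simp only [Option.mem_def, Option.some.injEq] at hy
    subst hy
    exact hx.symm
  by_cases hB : ∃ x, G.Adj b x ∧ x ∉ l
  · obtain ⟨x, hx, hxl⟩ := hB
    refine ⟨l ++ [x], by simp, ?_, ?_, by simp [hm]⟩
    · refine List.IsChain.append hchain (by simp) ?_
      intro y hy z hz
      rw [List.getLast?_eq_getLast_of_ne_nil hne] at hy
      simp only [List.head?_cons, Option.mem_def, Option.some.injEq] at hy hz
      subst hy; subst hz
      exact hx
    · rw [List.nodup_append]
      exact ⟨hnd, by simp, by intro y hy z hz; simp at hz; subst hz; exact fun h => hxl (h ▸ hy)⟩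
  push_neg at hA hB
  -- all neighbours of a and b lie in l
  set S := (G.neighborFinset a).image fun x => l.idxOf x with hS
  set T := (G.neighborFinset b).image fun x => l.idxOf x + 1 with hT
  have hScard : S.card = G.degree a := by
    rw [hS, ← SimpleGraph.card_neighborFinset_eq_degree]
    apply Finset.card_image_of_injOn
    intro x hx y hy hxy
    rw [Finset.mem_coe, SimpleGraph.mem_neighborFinset] at hx hy
    exact (List.idxOf_inj (hA x hx)).mp hxy
  have hTcard : T.card = G.degree b := by
    rw [hT, ← SimpleGraph.card_neighborFinset_eq_degree]
    apply Finset.card_image_of_injOn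
    intro x hx y hy hxy
    rw [Finset.mem_coe, SimpleGraph.mem_neighborFinset] at hx hy
    simp only at hxy
    exact (List.idxOf_inj (hB x hx)).mp (by omega)
  have hSsub : S ⊆ Finset.Ico 1 m := by
    intro i hi
    rw [hS, Finset.mem_image] at hi
    obtain ⟨x, hx, rfl⟩ := hi
    rw [SimpleGraph.mem_neighborFinset] at hx
    have h1 : l.idxOf x < m := List.idxOf_lt_length_iff.mpr (hA x hx)
    have h2 : l.idxOf x ≠ 0 := by
      intro h0
      have h3 := List.getElem_idxOf (xs := l) (x := x) (by omega)
      simp only [h0] at h3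
      rw [List.head_eq_getElem] at ha
      exact hx.ne (ha.trans h3)
    rw [Finset.mem_Ico]
    omega
  have hTsub : T ⊆ Finset.Ico 1 m := by
    intro i hi
    rw [hT, Finset.mem_image] at hi
    obtain ⟨x, hx, rfl⟩ := hi
    rw [SimpleGraph.mem_neighborFinset] at hx
    have h1 : l.idxOf x < m := List.idxOf_lt_length_iff.mpr (hB x hx)
    have h2 : l.idxOf x ≠ m - 1 := by
      intro h0
      have h3 := List.getElem_idxOf (xs := l) (x := x) (by omega)
      simp only [h0] at h3
      rw [List.getLast_eq_getElem] at hb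
      exact hx.ne (hb.trans h3)
    rw [Finset.mem_Ico]
    omega
  have hinter : (S ∩ T).Nonempty := by
    rw [← Finset.card_pos]
    have h1 : (S ∪ T).card + (S ∩ T).card = S.card + T.card :=
      Finset.card_union_add_card_inter S T
    have h2 : (S ∪ T).card ≤ m - 1 := by
      have := Finset.card_le_card (Finset.union_subset hSsub hTsub)
      simpa using this
    have h3 : d ≤ S.card := hScard ▸ hdeg a
    have h4 : d ≤ T.card := hTcard ▸ hdeg b
    omega
  obtain ⟨i, hi⟩ := hinter
  have hiIco : i ∈ Finset.Ico 1 m := hSsub (Finset.mem_inter.mp hi).1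
  rw [Finset.mem_Ico] at hiIco
  obtain ⟨hi1, him⟩ := hiIco
  rw [Finset.mem_inter, hS, hT, Finset.mem_image, Finset.mem_image] at hi
  obtain ⟨⟨x₁, hx₁, hix₁⟩, ⟨x₂, hx₂, hix₂⟩⟩ := hi
  rw [SimpleGraph.mem_neighborFinset] at hx₁ hx₂
  have hgi : l[i]'(by omega) = x₁ := by
    have h3 := List.getElem_idxOf (xs := l) (x := x₁) (by omega)
    simpa only [hix₁] using h3
  have hgi1 : l[i-1]'(by omega) = x₂ := by
    have h3 := List.getElem_idxOf (xs := l) (x := x₂) (by omega)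
    have h4 : l.idxOf x₂ = i - 1 := by omega
    simpa only [h4] using h3
  have hil : i < l.length := by omega
  have hil1 : i - 1 < l.length := by omega
  -- build the cycle list
  obtain ⟨cl, hcdef⟩ : ∃ cl, cl = l.drop i ++ (l.take i).reverse := ⟨_, rfl⟩
  have hdropne : l.drop i ≠ [] := by
    apply List.ne_nil_of_length_pos
    rw [List.length_drop]
    omega
  have htakene : l.take i ≠ [] := by
    apply List.ne_nil_of_length_pos
    rw [List.length_take]
    omega
  have hperm : cl ~ l := by
    calc cl = l.drop i ++ (l.take i).reverse := hcdef
    _ ~ l.drop i ++ l.take i := ((l.take i).reverse_perm).append_left (l.drop i)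
    _ ~ l.take i ++ l.drop i := List.perm_append_comm
    _ = l := List.take_append_drop i l
  have hcnd : cl.Nodup := hperm.nodup_iff.mpr hnd
  have hclen : cl.length = m := by
    rw [hcdef]
    simp only [List.length_append, List.length_drop, List.length_reverse,
      List.length_take]
    omega
  have h8 : l.drop i = (l[i]'(hil)) :: l.drop (i+1) :=
    List.drop_eq_getElem_cons hil
  have hchead : ∃ r, cl = (l[i]'(hil)) :: r := by
    refine ⟨l.drop (i+1) ++ (l.take i).reverse, ?_⟩
    rw [hcdef, h8]
    rfl
  have hdlast : (l.drop i).getLast? = some b := by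
    have h5 : (l.take i ++ l.drop i).getLast? = (l.drop i).getLast? :=
      List.getLast?_append_of_ne_nil _ hdropne
    rw [List.take_append_drop] at h5
    rw [← h5, List.getLast?_eq_getLast_of_ne_nil hne]
  have hrevhead : ((l.take i).reverse).head? = some (l[i-1]'(hil1)) := by
    rw [List.head?_reverse, List.getLast?_eq_getLast_of_ne_nil htakene]
    congr 1
    rw [List.getLast_eq_getElem, List.getElem_take]
    congr 1
    rw [List.length_take]
    omega
  have hclast : cl.getLast? = some a := by
    rw [hcdef, List.getLast?_append_of_ne_nil _ (by simpa using htakene),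
      List.getLast?_reverse, List.head?_take, if_neg (by omega),
      List.head?_eq_head hne]
  have hcchain : cl.Chain' G.Adj := by
    rw [hcdef]
    refine List.IsChain.append (List.IsChain.drop hchain i) ?_ ?_
    · rw [List.isChain_reverse]
      exact (List.IsChain.take hchain i).imp fun _ _ h => h.symm
    · intro x hx y hy
      rw [hdlast] at hx
      rw [hrevhead] at hy
      simp only [Option.mem_def, Option.some.injEq] at hx hy
      subst hx; subst hy
      rw [hgi1]
      exact hx₂
  have hccyc : ∀ x ∈ cl.getLast?, ∀ y ∈ cl.head?, G.Adj x y := by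
    intro x hx y hy
    obtain ⟨r, hr⟩ := hchead
    rw [hclast] at hx
    rw [hr, List.head?_cons] at hy
    simp only [Option.mem_def, Option.some.injEq] at hx hy
    subst hx; subst hy
    rw [hgi]
    exact hx₁
  -- find a vertex outside cl adjacent to a vertex in cl
  have hout : ∃ u, u ∉ cl := by
    by_contra h
    push_neg at h
    have h6 : cl.toFinset = Finset.univ := Finset.eq_univ_iff_forall.mpr
      fun v => List.mem_toFinset.mpr (h v)
    have h7 := List.toFinset_card_of_nodup hcnd
    rw [h6, Finset.card_univ] at h7
    omega
  obtain ⟨u, hu⟩ := hout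
  have hbc : b ∈ cl := hperm.mem_iff.mpr (hb ▸ List.getLast_mem hne)
  obtain ⟨p⟩ := hconn.preconnected u b
  obtain ⟨x, y, hxc, hyc, hxy⟩ := cross_edge p hu hbc
  set k := cl.idxOf y with hk
  have hklt : k < cl.length := List.idxOf_lt_length_iff.mpr hyc
  obtain ⟨r, hr⟩ := head_rotate hklt
  have hck : cl[k]'(hklt) = y := List.getElem_idxOf hklt
  refine ⟨x :: cl.rotate k, by simp, ?_, ?_, ?_⟩
  · rw [List.Chain', List.isChain_cons]
    refine ⟨?_, (cyc_rotate G.Adj k cl hcchain hccyc).1⟩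
    intro z hz
    rw [hr, List.head?_cons] at hz
    simp only [Option.mem_def, Option.some.injEq] at hz
    subst hz
    exact hck ▸ hxy
  · rw [List.nodup_cons]
    exact ⟨fun hmem => hxc (List.mem_rotate.mp hmem), List.nodup_rotate.mpr hcnd⟩
  · simp only [List.length_cons, List.length_rotate]
    omega

end Grow

theorem hamiltonian_path_of_connected_min_degree
    {V : Type*} [Fintype V] [DecidableEq V]
    (G : SimpleGraph V) [DecidableRel G.Adj]
    (d : ℕ) (hconn : G.Connected) (hdeg : ∀ v : V, d ≤ G.degree v)
    (hcard : Fintype.card V ≤ 2 * d) :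
    ∃ (u v : V) (p : G.Walk u v), p.IsHamiltonian := by
  have hne : Nonempty V := hconn.nonempty
  have hpos : 1 ≤ Fintype.card V := Fintype.card_pos
  have key : ∀ k : ℕ, ∀ l : List V, l ≠ [] → l.Chain' G.Adj → l.Nodup →
      l.length + k = Fintype.card V →
      ∃ l' : List V, l' ≠ [] ∧ l'.Chain' G.Adj ∧ l'.Nodup ∧
        l'.length = Fintype.card V := by
    intro k
    induction k with
    | zero =>
      intro l h1 h2 h3 h4
      exact ⟨l, h1, h2, h3, by omega⟩
    | succ k ih =>
      intro l h1 h2 h3 h4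
      obtain ⟨l', h1', h2', h3', h4'⟩ :=
        grow G d hconn hdeg hcard (fun R => cyc_rotate R)
          (fun p => cross_edge p) (fun hk => head_rotate hk) l h1 h2 h3 (by omega)
      exact ih l' h1' h2' h3' (by omega)
  obtain ⟨v⟩ := hne
  obtain ⟨l, h1, h2, h3, h4⟩ :=
    key (Fintype.card V - 1) [v] (by simp) (by simp [List.Chain']) (by simp) (by simp; omega)
  obtain ⟨u, p, hp⟩ := walk_of_chain l h2 h1
  refine ⟨_, u, p, ?_⟩
  have hpath : p.IsPath := SimpleGraph.Walk.IsPath.mk' (by rw [hp]; exact h3)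
  apply hpath.isHamiltonian_of_mem
  intro w
  rw [hp]
  have h6 : l.toFinset = Finset.univ := by
    apply Finset.eq_univ_of_card
    rw [List.toFinset_card_of_nodup h3, h4]
  rw [← List.mem_toFinset, h6]
  exact Finset.mem_univ w
end
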